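/- arXiv:2504.06839 — 3 statements merged into one kernel-verified Lean document; each statement's English description precedes it below -/
import Mathlib

section
/- For every n ≥ 1 there exists a constant cₙ > 0 such that E⁽ⁿ⁾(s,h) ≤ cₙ/(s+1) for all s ≥ 0 and h ∈ [-1,1]. -/
open MeasureTheory Real Set

/-- Core formula of the 2D Lorentz gas transition kernel, valid for `|h'| ≤ h`. -/
noncomputable def Qcore (s h h' : ℝ) : ℝ :=
  if 0 ≤ s ∧ s ≤ 1 / (1 + h) then 6 / Real.pi ^ 2
  else if 1 / (1 + h) < s ∧ s ≤ 1 / (1 + h') then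
    (6 / Real.pi ^ 2) * ((1 / s - (1 + h')) / (h - h'))
  else 0

/-- The 2D Lorentz gas transition kernel `Q(s, h | h')`, extended to all `h, h' ∈ [-1,1]`
by the symmetries `Q(s,h|h') = Q(s,h'|h) = Q(s,-h|-h')`. -/
noncomputable def Qker (s h h' : ℝ) : ℝ :=
  if |h'| ≤ h then Qcore s h h'
  else if |h| ≤ h' then Qcore s h' h
  else if |h'| ≤ -h then Qcore s (-h) (-h')
  else Qcore s (-h') (-h)

/-- Iterated kernels: `Qn 1 = Qker`, and
`Qn (n+1) (s,h|h') = ∫₀ˢ ∫₋₁¹ Q(s-s',h|h'') Qn n (s',h''|h') dh'' ds'`. -/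
noncomputable def Qn : ℕ → ℝ → ℝ → ℝ → ℝ
  | 0, _, _, _ => 0
  | 1, s, h, h' => Qker s h h'
  | n + 2, s, h, h' =>
      ∫ s' in Set.Ioc (0:ℝ) s, ∫ h'' in Set.Icc (-1:ℝ) 1,
        Qker (s - s') h h'' * Qn (n + 1) s' h'' h'

/-- `E⁽ⁿ⁾(s,h) = ∫ₛ^∞ ∫₋₁¹ Q⁽ⁿ⁾(s',h|h') dh' ds'`. -/
noncomputable def En (n : ℕ) (s h : ℝ) : ℝ :=
  ∫ s' in Set.Ioi s, ∫ h' in Set.Icc (-1:ℝ) 1, Qn n s' h h'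

/-- `E = E⁽¹⁾`. -/
noncomputable def Eker (s h : ℝ) : ℝ := En 1 s h

/-- Transition probability `Π(h|h') = ∫₀^∞ Q(s,h|h') ds`. -/
noncomputable def Pker (h h' : ℝ) : ℝ := ∫ s in Set.Ioi (0:ℝ), Qker s h h'

/-- `h''(θ,h')` as in Definition of `h''`. -/
noncomputable def hdd (θ h' : ℝ) : ℝ :=
  if 2 * Real.arcsin h' - 3 * Real.pi ≤ θ ∧ θ < 2 * Real.arcsin h' - Real.pi then
    Real.sin ((θ + 2 * Real.pi - 2 * Real.arcsin h') / 2)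
  else 0

/-- `∂h''/∂θ (θ, h')`. -/
noncomputable def dhdd (θ h' : ℝ) : ℝ :=
  if 2 * Real.arcsin h' - 3 * Real.pi ≤ θ ∧ θ < 2 * Real.arcsin h' - Real.pi then
    Real.cos ((θ + 2 * Real.pi - 2 * Real.arcsin h') / 2) / 2
  else 0

/-- The function `f(θ,t,h|h')`. -/
noncomputable def fker (θ t h h' : ℝ) : ℝ :=
  ∑' ℓ : ℤ, dhdd (θ + 2 * (ℓ : ℝ) * Real.pi) h' *
    ∫ t' in Set.Ioc (0:ℝ) t,
      Qker (t - t') h (hdd (θ + 2 * (ℓ : ℝ) * Real.pi) h') *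
      Qker t' (hdd (θ + 2 * (ℓ : ℝ) * Real.pi) h') h'

/-- Dot product `k · v(θ)` with `v(θ) = (cos θ, sin θ)`. -/
noncomputable def dotv (k : ℝ × ℝ) (θ : ℝ) : ℝ := k.1 * Real.cos θ + k.2 * Real.sin θ

/-- The complex-valued function `g^k(θ,t,h|θ',h')`. -/
noncomputable def gk (k : ℝ × ℝ) (θ t h θ' h' : ℝ) : ℂ :=
  ∑' ℓ : ℤ,
    ((dhdd (θ - θ' + 2 * (ℓ : ℝ) * Real.pi) h' : ℝ) : ℂ) *
    Complex.exp (2 * Real.pi * t * dotv k θ * Complex.I) *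
    ∫ t' in Set.Ioc (0:ℝ) t,
      ((Qker (t - t') h (hdd (θ - θ' + 2 * (ℓ : ℝ) * Real.pi) h') *
        Qker t' (hdd (θ - θ' + 2 * (ℓ : ℝ) * Real.pi) h') h' : ℝ) : ℂ) *
      Complex.exp (2 * Real.pi * t' *
        (dotv k (θ' - Real.pi + 2 * Real.arcsin h') - dotv k θ) * Complex.I)
lemma pi_sq_pos : 0 < Real.pi ^ 2 := by positivity

/-- In regime 2 (with the guard `|b| ≤ a`), basic facts. -/
lemma regime2_facts {s a b : ℝ} (hab : |b| ≤ a)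
    (h2 : 1 / (1 + a) < s ∧ s ≤ 1 / (1 + b)) :
    0 < s ∧ 0 < 1 + b ∧ 1 + b ≤ 1 / s ∧ 1 / s < 1 + a ∧ b < a := by
  have ha0 : 0 ≤ a := (abs_nonneg b).trans hab
  have ha1 : (0:ℝ) < 1 + a := by linarith
  have hs0 : 0 < s := lt_trans (by positivity) h2.1
  have hb1 : 0 < 1 + b := by
    by_contra hb
    push_neg at hb
    rcases lt_or_eq_of_le hb with hb | hb
    · have : 1 / (1 + b) < 0 := by
        apply div_neg_of_pos_of_neg one_pos hb
      linarith [h2.2]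
    · have : 1 / (1 + b) = 0 := by rw [hb]; simp
      linarith [h2.2, this]
  have h3 : 1 + b ≤ 1 / s := by
    rw [le_div_iff₀ hs0]
    calc (1 + b) * s = s * (1+b) := by ring
    _ ≤ (1 / (1+b)) * (1+b) := by
        apply mul_le_mul_of_nonneg_right h2.2 hb1.le
    _ = 1 := by field_simp
  have h4 : 1 / s < 1 + a := by
    rw [div_lt_iff₀ hs0]
    have := h2.1
    rw [div_lt_iff₀ ha1] at this
    linarith [this]
  refine ⟨hs0, hb1, h3, h4, by linarith⟩

lemma Qcore_nonneg {s a b : ℝ} (hab : |b| ≤ a) : 0 ≤ Qcore s a b := by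
  unfold Qcore
  split_ifs with h1 h2
  · positivity
  · have := regime2_facts hab h2
    have h6 : (0:ℝ) ≤ 6 / Real.pi ^ 2 := by positivity
    apply mul_nonneg h6
    apply div_nonneg (by linarith [this.2.2.1]) (by linarith [this.2.2.2.2])
  · exact le_refl _

lemma Qcore_le {s a b : ℝ} (hab : |b| ≤ a) (hs : 0 ≤ s) :
    Qcore s a b ≤ 18 / Real.pi ^ 2 / (1 + s) := by
  have ha0 : 0 ≤ a := (abs_nonneg b).trans hab
  have hs1 : (0:ℝ) < 1 + s := by linarith
  have hK : (0:ℝ) < 6 / Real.pi ^ 2 := by positivity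
  unfold Qcore
  split_ifs with h1 h2
  · -- regime 1 : s ≤ 1/(1+a) ≤ 1
    have ha1 : (0:ℝ) < 1 + a := by linarith
    have hs2 : s ≤ 1 := le_trans h1.2 (by
      rw [div_le_one ha1]; linarith)
    rw [le_div_iff₀ hs1]
    calc 6 / Real.pi ^ 2 * (1 + s) ≤ 6 / Real.pi ^ 2 * 2 :=
          mul_le_mul_of_nonneg_left (by linarith) hK.le
    _ = 12 / Real.pi ^ 2 := by ring
    _ ≤ 18 / Real.pi ^ 2 := by gcongr <;> norm_num
  · obtain ⟨hs0, hb1, h3, h4, hba⟩ := regime2_facts hab h2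
    have hdpos : 0 < a - b := by linarith
    have hNnn : 0 ≤ 1 / s - (1 + b) := by linarith
    have hratio : (1 / s - (1 + b)) / (a - b) ≤ 1 := by
      rw [div_le_one hdpos]; linarith
    rcases le_or_gt s 2 with hs2 | hs2
    · calc 6 / Real.pi ^ 2 * ((1 / s - (1 + b)) / (a - b)) ≤ 6 / Real.pi ^ 2 * 1 :=
            mul_le_mul_of_nonneg_left hratio hK.le
      _ = 6 / Real.pi ^ 2 := by ring
      _ ≤ 18 / Real.pi ^ 2 / (1 + s) := by
          rw [le_div_iff₀ hs1, div_mul_eq_mul_div, div_le_div_iff₀ pi_sq_pos pi_sq_pos]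
          nlinarith [pi_sq_pos]
    · -- s > 2
      have hN : 1 / s - (1 + b) ≤ 1 / s := by linarith
      have hd2 : 1 - 1 / s ≤ a - b := by
        have : 1 ≤ 1 + a := by linarith
        linarith
      have h1s : 0 < 1 / s := by positivity
      have hd2' : 0 < 1 - 1/s := by
        rw [sub_pos, div_lt_one hs0]; linarith
      have hratio2 : (1 / s - (1 + b)) / (a - b) ≤ (1 / s) / (1 - 1 / s) :=
        div_le_div₀ h1s.le hN hd2' hd2
      have key : (1 / s) / (1 - 1 / s) = 1 / (s - 1) := by
        have h1 : s ≠ 0 := ne_of_gt hs0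
        have h2 : (1 - 1/s) ≠ 0 := ne_of_gt hd2'
        have h3 : s - 1 ≠ 0 := sub_ne_zero.mpr (by linarith)
        field_simp
      have hr3 : (1 / s - (1 + b)) / (a - b) ≤ 3 / (1 + s) := by
        refine (hratio2.trans_eq key).trans ?_
        rw [div_le_div_iff₀ (by linarith) hs1]
        linarith
      calc 6 / Real.pi ^ 2 * ((1 / s - (1 + b)) / (a - b))
          ≤ 6 / Real.pi ^ 2 * (3 / (1 + s)) := mul_le_mul_of_nonneg_left hr3 hK.le
      _ = 18 / Real.pi ^ 2 / (1 + s) := by ring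
  · positivity

lemma Qcore_eq_zero {s a b : ℝ} (hab : |b| ≤ a) (h1 : 1 < s * (1 + b)) :
    Qcore s a b = 0 := by
  have ha0 : 0 ≤ a := (abs_nonneg b).trans hab
  have ha1 : (0:ℝ) < 1 + a := by linarith
  have hba : b ≤ a := (le_abs_self b).trans hab
  unfold Qcore
  split_ifs with hr1 hr2
  · exfalso
    have hs0 : 0 ≤ s := hr1.1
    have hb1 : 0 < 1 + b := by nlinarith
    have : s * (1 + a) ≤ 1 := by
      calc s * (1 + a) ≤ (1 / (1 + a)) * (1 + a) := mul_le_mul_of_nonneg_right hr1.2 ha1.le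
      _ = 1 := by field_simp
    nlinarith
  · exfalso
    obtain ⟨hs0, hb1, h3, h4, _⟩ := regime2_facts hab hr2
    have : s * (1 + b) ≤ 1 := by
      calc s * (1 + b) ≤ (1 / (1 + b)) * (1 + b) := mul_le_mul_of_nonneg_right hr2.2 hb1.le
      _ = 1 := by field_simp
    linarith
  · rfl

lemma branch4_guard {h h' : ℝ} (h1 : ¬|h'| ≤ h) (h2 : ¬|h| ≤ h') (h3 : ¬|h'| ≤ -h) :
    |h| ≤ -h' := by
  push_neg at h1 h2 h3
  by_contra hc
  push_neg at hc
  have hh1 : h' < |h| := h2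
  have hh2 : -|h| < h' := by linarith
  have : |h'| < |h| := abs_lt.mpr ⟨hh2, hh1⟩
  rcases le_or_gt 0 h with hh | hh
  · rw [abs_of_nonneg hh] at this; linarith
  · rw [abs_of_neg hh] at this; linarith

lemma Qker_nonneg (s h h' : ℝ) : 0 ≤ Qker s h h' := by
  unfold Qker
  split_ifs with g1 g2 g3
  · exact Qcore_nonneg g1
  · exact Qcore_nonneg g2
  · exact Qcore_nonneg (by rwa [abs_neg])
  · exact Qcore_nonneg (by rw [abs_neg]; exact branch4_guard g1 g2 g3)

lemma Qker_le {s h h' : ℝ} (hs : 0 ≤ s) (hh' : |h'| ≤ 1) :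
    Qker s h h' ≤ 72 / Real.pi ^ 2 / ((1 + s) * (1 + s * (1 - |h'|)) ^ 2) := by
  have hs1 : (0:ℝ) < 1 + s := by linarith
  have hρ0 : 0 ≤ 1 - |h'| := by linarith
  have hd1 : (0:ℝ) < 1 + s * (1 - |h'|) := by positivity
  rcases le_or_gt (s * (1 - |h'|)) 1 with hχ | hχ
  · -- small regime : use Qcore_le on every branch
    have hd2 : (1 + s * (1 - |h'|)) ^ 2 ≤ 4 := by nlinarith
    have key : 18 / Real.pi ^ 2 / (1 + s) ≤
        72 / Real.pi ^ 2 / ((1 + s) * (1 + s * (1 - |h'|)) ^ 2) := by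
      rw [div_le_div_iff₀ (by positivity) (by positivity)]
      have hp := pi_sq_pos
      rw [div_mul_eq_mul_div, div_mul_eq_mul_div, div_le_div_iff₀ hp hp]
      have h72 : 18 * ((1 + s) * (1 + s * (1 - |h'|)) ^ 2) ≤ 18 * ((1 + s) * 4) := by
        apply mul_le_mul_of_nonneg_left _ (by norm_num)
        exact mul_le_mul_of_nonneg_left hd2 hs1.le
      nlinarith [pi_sq_pos]
    refine le_trans ?_ key
    unfold Qker
    split_ifs with g1 g2 g3
    · exact Qcore_le g1 hs
    · exact Qcore_le g2 hs
    · exact Qcore_le (by rwa [abs_neg]) hs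
    · exact Qcore_le (by rw [abs_neg]; exact branch4_guard g1 g2 g3) hs
  · -- support regime : kernel vanishes
    have hrhs : 0 ≤ 72 / Real.pi ^ 2 / ((1 + s) * (1 + s * (1 - |h'|)) ^ 2) := by positivity
    refine le_trans (le_of_eq ?_) hrhs
    unfold Qker
    have habs : -|h'| ≤ h' := neg_abs_le h'
    have habs' : h' ≤ |h'| := le_abs_self h'
    split_ifs with g1 g2 g3
    · -- b = h'
      exact Qcore_eq_zero g1 (by nlinarith)
    · -- b = h ; guard |h| ≤ h' gives 1 + h ≥ 1 - h' = 1 - |h'|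
      have hh'0 : 0 ≤ h' := le_trans (abs_nonneg h) g2
      have : 1 - |h'| ≤ 1 + h := by
        rw [abs_of_nonneg hh'0]
        have : -h' ≤ h := by
          have := neg_abs_le h; linarith [g2]
        linarith
      exact Qcore_eq_zero g2 (by nlinarith)
    · -- b = -h'
      have : 1 - |h'| ≤ 1 + -h' := by linarith
      exact Qcore_eq_zero (by rwa [abs_neg]) (by nlinarith)
    · -- b = -h ; guard |h| ≤ -h'
      have g4 : |h| ≤ -h' := branch4_guard g1 g2 g3
      have hh'0 : h' ≤ 0 := by linarith [(abs_nonneg h).trans g4]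
      have : 1 - |h'| ≤ 1 + -h := by
        rw [abs_of_nonpos hh'0]
        have : h ≤ -h' := le_trans (le_abs_self h) g4
        have h2 : -h ≥ h' := by linarith [(neg_abs_le h)]
        linarith [le_trans (le_abs_self h) g4]
      exact Qcore_eq_zero (by rw [abs_neg]; exact g4) (by nlinarith)

lemma measurable_Qcore {u : ℝ} {f g : ℝ → ℝ} (hf : Measurable f) (hg : Measurable g) :
    Measurable fun x => Qcore u (f x) (g x) := by
  unfold Qcore
  have m1 : Measurable fun x => 1 / (1 + f x) := (measurable_const.div (measurable_const.add hf))
  have m2 : Measurable fun x => 1 / (1 + g x) := (measurable_const.div (measurable_const.add hg))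
  apply Measurable.ite
  · have : {x | 0 ≤ u ∧ u ≤ 1 / (1 + f x)} = {x | 0 ≤ u} ∩ {x | u ≤ 1 / (1 + f x)} := rfl
    rw [this]
    exact (MeasurableSet.const _).inter (measurableSet_le measurable_const m1)
  · exact measurable_const
  apply Measurable.ite
  · have : {x | 1 / (1 + f x) < u ∧ u ≤ 1 / (1 + g x)}
        = {x | 1 / (1 + f x) < u} ∩ {x | u ≤ 1 / (1 + g x)} := rfl
    rw [this]
    exact (measurableSet_lt m1 measurable_const).inter (measurableSet_le measurable_const m2)
  · exact measurable_const.mul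
      (((measurable_const.sub (measurable_const.add hg))).div (hf.sub hg))
  · exact measurable_const

lemma measurable_Qker (u h : ℝ) : Measurable fun x => Qker u h x := by
  unfold Qker
  apply Measurable.ite (measurableSet_le measurable_abs measurable_const)
  · exact measurable_Qcore measurable_const measurable_id
  apply Measurable.ite (measurableSet_le measurable_const measurable_id)
  · exact measurable_Qcore measurable_id measurable_const
  apply Measurable.ite (measurableSet_le measurable_abs measurable_const)
  · exact measurable_Qcore measurable_const measurable_neg
  · exact measurable_Qcore measurable_neg measurable_const

lemma core_int {u : ℝ} (hu : 0 < u) :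
    ∫ y in (0:ℝ)..1, ((1 + u * y) ^ 2)⁻¹ = (1 + u)⁻¹ := by
  have h : ∀ y ∈ uIcc (0:ℝ) 1, HasDerivAt (fun y => -(u + u^2*y)⁻¹) (((1 + u*y)^2)⁻¹) y := by
    intro y hy
    rw [uIcc_of_le (by norm_num)] at hy
    have hy0 : 0 ≤ y := hy.1
    have hne : u + u^2*y ≠ 0 := by nlinarith
    have hg : HasDerivAt (fun y : ℝ => u + u^2*y) (u^2) y := by
      simpa using ((hasDerivAt_id y).const_mul (u^2)).const_add u
    have := (hg.inv hne).neg
    refine this.congr_deriv (Eq.symm ?_)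
    rw [neg_div, neg_neg]
    have hA : (1 + u * y) ≠ 0 := by nlinarith
    field_simp
  have hint : IntervalIntegrable (fun y : ℝ => ((1 + u*y)^2)⁻¹) volume 0 1 := by
    apply ContinuousOn.intervalIntegrable
    apply ContinuousOn.inv₀
    · fun_prop
    · intro x hx
      rw [uIcc_of_le (by norm_num)] at hx
      have h0 : 0 ≤ x := hx.1
      have : (0:ℝ) < 1 + u * x := by nlinarith
      positivity
  rw [intervalIntegral.integral_eq_sub_of_hasDerivAt h hint]
  have h1 : u + u^2 ≠ 0 := by nlinarith
  have h2 : (1:ℝ) + u ≠ 0 := by nlinarith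
  field_simp
  ring

lemma inner_int_bound {u : ℝ} (hu : 0 ≤ u) :
    ∫ t in Icc (-1:ℝ) 1, ((1 + u * (1 - |t|)) ^ 2)⁻¹ ≤ 2 / (1 + u) := by
  rcases eq_or_lt_of_le hu with h0 | hu0
  · subst h0
    simp only [zero_mul, add_zero, one_pow, inv_one]
    rw [setIntegral_const]
    simp [Real.volume_Icc]
    norm_num
  · have cont : ContinuousOn (fun t : ℝ => ((1 + u * (1 - |t|))^2)⁻¹) (Icc (-1) 1) := by
      apply ContinuousOn.inv₀
      · fun_prop
      · intro x hx
        have h1 : |x| ≤ 1 := abs_le.mpr ⟨hx.1, hx.2⟩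
        have : (0:ℝ) < 1 + u * (1 - |x|) := by nlinarith
        positivity
    have hi1 : IntegrableOn (fun t : ℝ => ((1 + u * (1 - |t|))^2)⁻¹) (Ioc (-1) 0) := by
      apply IntegrableOn.mono_set _ (Set.Ioc_subset_Icc_self)
      exact (cont.mono (Set.Icc_subset_Icc (le_refl _) (by norm_num))).integrableOn_Icc
    have hi2 : IntegrableOn (fun t : ℝ => ((1 + u * (1 - |t|))^2)⁻¹) (Ioc 0 1) := by
      apply IntegrableOn.mono_set _ (Set.Ioc_subset_Icc_self)
      exact (cont.mono (Set.Icc_subset_Icc (by norm_num) (le_refl _))).integrableOn_Icc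
    rw [MeasureTheory.integral_Icc_eq_integral_Ioc]
    rw [← Set.Ioc_union_Ioc_eq_Ioc (by norm_num : (-1:ℝ) ≤ 0) (by norm_num : (0:ℝ) ≤ 1)]
    rw [setIntegral_union (Set.Ioc_disjoint_Ioc_of_le le_rfl) measurableSet_Ioc hi1 hi2]
    have p1 : ∫ t in Ioc (-1:ℝ) 0, ((1 + u * (1 - |t|))^2)⁻¹ = (1+u)⁻¹ := by
      rw [setIntegral_congr_fun measurableSet_Ioc
        (fun t ht => by rw [abs_of_nonpos ht.2] : EqOn _ (fun t : ℝ => ((1 + u * (1 - -t))^2)⁻¹) _)]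
      rw [← intervalIntegral.integral_of_le (by norm_num : (-1:ℝ) ≤ 0)]
      calc ∫ t in (-1:ℝ)..0, ((1 + u * (1 - -t))^2)⁻¹
          = ∫ t in (-1:ℝ)..0, ((fun y : ℝ => ((1 + u * y)^2)⁻¹) (t + 1)) := by
            apply intervalIntegral.integral_congr
            intro x _
            show ((1 + u * (1 - -x))^2)⁻¹ = ((1 + u * (x+1))^2)⁻¹
            ring_nf
      _ = ∫ t in (0:ℝ)..1, ((1 + u * t)^2)⁻¹ := by
            have key := intervalIntegral.integral_comp_add_right
              (a := (-1:ℝ)) (b := 0) (f := fun y : ℝ => ((1 + u * y)^2)⁻¹) 1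
            norm_num at key ⊢
            exact key
      _ = (1+u)⁻¹ := core_int hu0
    have p2 : ∫ t in Ioc (0:ℝ) 1, ((1 + u * (1 - |t|))^2)⁻¹ = (1+u)⁻¹ := by
      rw [setIntegral_congr_fun measurableSet_Ioc
        (fun t ht => by rw [abs_of_pos ht.1] : EqOn _ (fun t : ℝ => ((1 + u * (1 - t))^2)⁻¹) _)]
      rw [← intervalIntegral.integral_of_le (by norm_num : (0:ℝ) ≤ 1)]
      calc ∫ t in (0:ℝ)..1, ((1 + u * (1 - t))^2)⁻¹
          = ∫ t in (0:ℝ)..1, ((1 + u * t)^2)⁻¹ := by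
            have key := intervalIntegral.integral_comp_sub_left
              (a := (0:ℝ)) (b := 1) (f := fun y : ℝ => ((1 + u * y)^2)⁻¹) 1
            norm_num at key ⊢
            exact key
      _ = (1+u)⁻¹ := core_int hu0
    rw [p1, p2]
    rw [div_eq_mul_inv]
    linarith

lemma cont_inner (u : ℝ) (hu : 0 ≤ u) :
    ContinuousOn (fun t : ℝ => ((1 + u * (1 - |t|))^2)⁻¹) (Icc (-1) 1) := by
  apply ContinuousOn.inv₀
  · fun_prop
  · intro x hx
    have h1 : |x| ≤ 1 := abs_le.mpr ⟨hx.1, hx.2⟩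
    have : (0:ℝ) < 1 + u * (1 - |x|) := by nlinarith
    positivity

lemma Qker_marg {u h : ℝ} (hu : 0 ≤ u) :
    ∫ x in Icc (-1:ℝ) 1, Qker u h x ≤ 144 / Real.pi ^ 2 / (1 + u) ^ 2 := by
  have hu1 : (0:ℝ) < 1 + u := by linarith
  set g : ℝ → ℝ := fun x => (72 / Real.pi ^ 2 / (1 + u)) * ((1 + u * (1 - |x|))^2)⁻¹ with hg
  have hgi : Integrable g (volume.restrict (Icc (-1:ℝ) 1)) := by
    have : IntegrableOn g (Icc (-1:ℝ) 1) volume := by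
      apply ContinuousOn.integrableOn_Icc
      exact ContinuousOn.mul continuousOn_const (cont_inner u hu)
    exact this
  have hmono : ∫ x in Icc (-1:ℝ) 1, Qker u h x ≤ ∫ x in Icc (-1:ℝ) 1, g x := by
    apply integral_mono_of_nonneg
    · exact Filter.Eventually.of_forall fun x => Qker_nonneg u h x
    · exact hgi
    · rw [Filter.EventuallyLE, MeasureTheory.ae_restrict_iff' measurableSet_Icc]
      apply Filter.Eventually.of_forall
      intro x hx
      have h1 : |x| ≤ 1 := abs_le.mpr ⟨hx.1, hx.2⟩
      have := Qker_le (h := h) hu h1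
      calc Qker u h x ≤ 72 / Real.pi ^ 2 / ((1 + u) * (1 + u * (1 - |x|)) ^ 2) := this
      _ = g x := by rw [hg]; rw [← div_div, div_eq_mul_inv]
  refine hmono.trans ?_
  rw [hg]
  rw [MeasureTheory.integral_const_mul]
  have hK : (0:ℝ) ≤ 72 / Real.pi ^ 2 / (1 + u) := by positivity
  calc (72 / Real.pi ^ 2 / (1 + u)) * ∫ x in Icc (-1:ℝ) 1, ((1 + u * (1 - |x|))^2)⁻¹
      ≤ (72 / Real.pi ^ 2 / (1 + u)) * (2 / (1 + u)) :=
        mul_le_mul_of_nonneg_left (inner_int_bound hu) hK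
  _ = 144 / Real.pi ^ 2 / (1 + u) ^ 2 := by field_simp; ring

noncomputable def ell (ρ : ℝ) : ℝ := 3 + 2 * ρ ^ (-(1/2) : ℝ)

noncomputable def Vbd (s ρ : ℝ) : ℝ :=
  ((1 + s) * (1 + s * ρ) ^ 2)⁻¹ + ell ρ * ((1 + s) ^ 2)⁻¹

lemma ell_nonneg {ρ : ℝ} (hρ : 0 ≤ ρ) : 0 ≤ ell ρ := by
  unfold ell
  have := Real.rpow_nonneg hρ (-(1/2) : ℝ)
  linarith

lemma Vbd_nonneg {s ρ : ℝ} (hs : 0 ≤ s) (hρ : 0 ≤ ρ) : 0 ≤ Vbd s ρ := by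
  unfold Vbd
  have h1 : (0:ℝ) < 1 + s := by linarith
  have h2 : (0:ℝ) < 1 + s * ρ := by nlinarith
  have := ell_nonneg hρ
  positivity

lemma tail_piece {s c : ℝ} (hcs : c ≤ s) :
    ∫ x in Ioc c s, ((1 + (s - x))^2)⁻¹ ≤ 1 := by
  rw [← intervalIntegral.integral_of_le hcs]
  have h : ∀ x ∈ uIcc c s, HasDerivAt (fun x => (1 + (s - x))⁻¹) (((1 + (s - x))^2)⁻¹) x := by
    intro x hx
    rw [uIcc_of_le hcs] at hx
    have hxs : x ≤ s := hx.2
    have hne : 1 + (s - x) ≠ 0 := ne_of_gt (by linarith [hx.2])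
    have hg : HasDerivAt (fun x : ℝ => 1 + (s - x)) (-1) x := by
      simpa using ((hasDerivAt_id x).const_sub s).const_add 1
    have := hg.inv hne
    refine this.congr_deriv (Eq.symm ?_)
    norm_num
  have hint : IntervalIntegrable (fun x : ℝ => ((1 + (s - x))^2)⁻¹) volume c s := by
    apply ContinuousOn.intervalIntegrable
    apply ContinuousOn.inv₀
    · fun_prop
    · intro x hx
      rw [uIcc_of_le hcs] at hx
      have : (0:ℝ) < 1 + (s - x) := by linarith [hx.2]
      positivity
  rw [intervalIntegral.integral_eq_sub_of_hasDerivAt h hint]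
  have h1 : (0:ℝ) < 1 + (s - c) := by linarith
  have h2 : (0:ℝ) ≤ (1 + (s - c))⁻¹ := by positivity
  simp only [sub_self, add_zero, inv_one]
  linarith

lemma int_inv_sq {T : ℝ} (hT : 0 ≤ T) :
    ∫ x in Ioc (0:ℝ) T, ((1 + x)^2)⁻¹ ≤ 1 := by
  rw [← intervalIntegral.integral_of_le hT]
  have h : ∀ x ∈ uIcc (0:ℝ) T, HasDerivAt (fun x => -(1 + x)⁻¹) (((1 + x)^2)⁻¹) x := by
    intro x hx
    rw [uIcc_of_le hT] at hx
    have hne : 1 + x ≠ 0 := ne_of_gt (by linarith [hx.1])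
    have hg : HasDerivAt (fun x : ℝ => 1 + x) 1 x := by
      simpa using (hasDerivAt_id x).const_add 1
    have := (hg.inv hne).neg
    refine this.congr_deriv (Eq.symm ?_)
    rw [neg_div, neg_neg, one_div]
  have hint : IntervalIntegrable (fun x : ℝ => ((1 + x)^2)⁻¹) volume 0 T := by
    apply ContinuousOn.intervalIntegrable
    apply ContinuousOn.inv₀
    · fun_prop
    · intro x hx
      rw [uIcc_of_le hT] at hx
      have : (0:ℝ) < 1 + x := by linarith [hx.1]
      positivity
  rw [intervalIntegral.integral_eq_sub_of_hasDerivAt h hint]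
  have h1 : (0:ℝ) < 1 + T := by linarith
  have h2 : (0:ℝ) ≤ (1 + T)⁻¹ := by positivity
  simp only [add_zero, inv_one]
  linarith

lemma int_log {T : ℝ} (hT : 0 ≤ T) :
    ∫ x in Ioc (0:ℝ) T, (1 + x)⁻¹ = Real.log (1 + T) := by
  rw [← intervalIntegral.integral_of_le hT]
  have h : ∀ x ∈ uIcc (0:ℝ) T, HasDerivAt (fun x => Real.log (1 + x)) ((1 + x)⁻¹) x := by
    intro x hx
    rw [uIcc_of_le hT] at hx
    have hne : 1 + x ≠ 0 := ne_of_gt (by linarith [hx.1])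
    have hg : HasDerivAt (fun x : ℝ => 1 + x) 1 x := by
      simpa using (hasDerivAt_id x).const_add 1
    have := hg.log hne
    convert this using 1
    rw [one_div]
  have hint : IntervalIntegrable (fun x : ℝ => (1 + x)⁻¹) volume 0 T := by
    apply ContinuousOn.intervalIntegrable
    apply ContinuousOn.inv₀
    · fun_prop
    · intro x hx
      rw [uIcc_of_le hT] at hx
      have : (0:ℝ) < 1 + x := by linarith [hx.1]
      positivity
  rw [intervalIntegral.integral_eq_sub_of_hasDerivAt h hint]
  simp

lemma int_cube {T₀ T : ℝ} (h0 : 0 < T₀) (hT : T₀ ≤ T) :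
    ∫ x in Ioc T₀ T, (x^3)⁻¹ ≤ (T₀^2)⁻¹ / 2 := by
  rw [← intervalIntegral.integral_of_le hT]
  have h : ∀ x ∈ uIcc T₀ T, HasDerivAt (fun x => -(2 * x^2)⁻¹) ((x^3)⁻¹) x := by
    intro x hx
    rw [uIcc_of_le hT] at hx
    have hx0 : 0 < x := lt_of_lt_of_le h0 hx.1
    have hne : 2 * x^2 ≠ 0 := by positivity
    have hg : HasDerivAt (fun x : ℝ => 2 * x^2) (4 * x) x := by
      have h' := (hasDerivAt_pow 2 x).const_mul (2:ℝ)
      norm_num at h'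
      refine h'.congr_deriv ?_
      ring
    have := (hg.inv hne).neg
    refine this.congr_deriv (Eq.symm ?_)
    rw [neg_div, neg_neg]
    rw [eq_div_iff (by positivity)]
    field_simp
    ring
  have hint : IntervalIntegrable (fun x : ℝ => (x^3)⁻¹) volume T₀ T := by
    apply ContinuousOn.intervalIntegrable
    apply ContinuousOn.inv₀
    · fun_prop
    · intro x hx
      rw [uIcc_of_le hT] at hx
      have : 0 < x := lt_of_lt_of_le h0 hx.1
      positivity
  rw [intervalIntegral.integral_eq_sub_of_hasDerivAt h hint]
  have h1 : (0:ℝ) < T := lt_of_lt_of_le h0 hT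
  have h2 : (0:ℝ) ≤ (2 * T^2)⁻¹ := by positivity
  have h3 : (2 * T₀^2)⁻¹ = (T₀^2)⁻¹ / 2 := by
    rw [mul_inv, div_eq_mul_inv]; ring
  linarith [h3]

lemma log_le_ell_aux {ρ : ℝ} (h0 : 0 < ρ) (h1 : ρ ≤ 1) :
    Real.log (1 + 1/ρ) ≤ 2 * ρ ^ (-(1/2) : ℝ) - 1 := by
  set y := ρ ^ (-(1/2) : ℝ) with hy
  have hy0 : 0 < y := Real.rpow_pos_of_pos h0 _
  have hsq : y * y = 1/ρ := by
    rw [hy, ← Real.rpow_add h0]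
    have he : (-(1/2) + -(1/2) : ℝ) = -1 := by norm_num
    rw [he, Real.rpow_neg_one, one_div]
  have hlog2 : Real.log 2 ≤ 1 := by
    have := Real.log_le_sub_one_of_pos (by norm_num : (0:ℝ) < 2)
    linarith
  have h2 : 1 + 1/ρ ≤ 2 * (y * y) := by
    rw [hsq]
    have : 1 ≤ 1/ρ := by
      rw [le_div_iff₀ h0]; linarith
    linarith
  have h3 : Real.log (1 + 1/ρ) ≤ Real.log (2 * (y * y)) := by
    apply Real.log_le_log (by positivity) h2
  have h4 : Real.log (2 * (y * y)) = Real.log 2 + Real.log y + Real.log y := by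
    rw [Real.log_mul (by norm_num) (by positivity), Real.log_mul (by positivity) (by positivity)]
    ring
  have h5 : Real.log y ≤ y - 1 := Real.log_le_sub_one_of_pos hy0
  linarith

lemma A_bound {s ρ : ℝ} (hs : 0 ≤ s) (h0 : 0 < ρ) (h1 : ρ ≤ 1) :
    ∫ x in Ioc (0:ℝ) (s/2), ((1 + x) * (1 + x * ρ)^2)⁻¹ ≤ ell ρ := by
  have hpt : ∀ x : ℝ, 0 ≤ x → ((1 + x) * (1 + x * ρ)^2)⁻¹ ≤ (1 + x)⁻¹ := by
    intro x hx
    have hd1 : (0:ℝ) < 1 + x := by linarith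
    have hd2 : (0:ℝ) < 1 + x * ρ := by nlinarith
    rw [inv_le_inv₀ (by positivity) hd1]
    have e : 1 ≤ (1 + x * ρ)^2 := by nlinarith [mul_nonneg hx h0.le, sq_nonneg (x * ρ)]
    nlinarith
  have hcont : ContinuousOn (fun x : ℝ => ((1 + x) * (1 + x * ρ)^2)⁻¹) (Icc 0 (s/2)) := by
    apply ContinuousOn.inv₀
    · fun_prop
    · intro x hx
      have hx0 : 0 ≤ x := hx.1
      have hd1 : (0:ℝ) < 1 + x := by linarith
      have hd2 : (0:ℝ) < 1 + x * ρ := by nlinarith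
      exact ne_of_gt (mul_pos hd1 (pow_pos hd2 2))
  have hcont1 : ContinuousOn (fun x : ℝ => (1 + x)⁻¹) (Icc 0 (s/2)) := by
    apply ContinuousOn.inv₀
    · fun_prop
    · intro x hx
      exact ne_of_gt (by linarith [hx.1])
  have hell : Real.log (1 + 1/ρ) ≤ 2 * ρ ^ (-(1/2) : ℝ) - 1 := log_le_ell_aux h0 h1
  rcases le_or_gt (s/2) (1/ρ) with hc | hc
  · -- short interval
    calc ∫ x in Ioc (0:ℝ) (s/2), ((1 + x) * (1 + x * ρ)^2)⁻¹
        ≤ ∫ x in Ioc (0:ℝ) (s/2), (1 + x)⁻¹ := by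
          apply integral_mono_of_nonneg
          · rw [Filter.EventuallyLE, MeasureTheory.ae_restrict_iff' measurableSet_Ioc]
            apply Filter.Eventually.of_forall
            intro x hx
            simp only [Pi.zero_apply]
            have hd1 : (0:ℝ) < 1 + x := by linarith [hx.1]
            have hd2 : (0:ℝ) < 1 + x * ρ := by nlinarith [hx.1]
            exact inv_nonneg.mpr (le_of_lt (mul_pos hd1 (pow_pos hd2 2)))
          · exact (hcont1.integrableOn_Icc).mono_set Set.Ioc_subset_Icc_self
          · rw [Filter.EventuallyLE, MeasureTheory.ae_restrict_iff' measurableSet_Ioc]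
            exact Filter.Eventually.of_forall fun x hx => hpt x hx.1.le
    _ = Real.log (1 + s/2) := int_log (by linarith)
    _ ≤ Real.log (1 + 1/ρ) := by
        apply Real.log_le_log (by linarith) (by linarith)
    _ ≤ ell ρ := by unfold ell; linarith
  · -- split at 1/ρ
    have hρinv : 0 < 1/ρ := by positivity
    rw [← Set.Ioc_union_Ioc_eq_Ioc (le_of_lt hρinv) (le_of_lt hc)]
    have hi1 : IntegrableOn (fun x : ℝ => ((1 + x) * (1 + x * ρ)^2)⁻¹) (Ioc 0 (1/ρ)) := by
      apply IntegrableOn.mono_set _ (Set.Ioc_subset_Icc_self)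
      exact (hcont.mono (Set.Icc_subset_Icc (le_refl _) (by linarith))).integrableOn_Icc
    have hi2 : IntegrableOn (fun x : ℝ => ((1 + x) * (1 + x * ρ)^2)⁻¹) (Ioc (1/ρ) (s/2)) := by
      apply IntegrableOn.mono_set _ (Set.Ioc_subset_Icc_self)
      exact (hcont.mono (Set.Icc_subset_Icc (by linarith) (le_refl _))).integrableOn_Icc
    rw [setIntegral_union (Set.Ioc_disjoint_Ioc_of_le le_rfl) measurableSet_Ioc hi1 hi2]
    have p1 : ∫ x in Ioc (0:ℝ) (1/ρ), ((1 + x) * (1 + x * ρ)^2)⁻¹ ≤ Real.log (1 + 1/ρ) := by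
      calc ∫ x in Ioc (0:ℝ) (1/ρ), ((1 + x) * (1 + x * ρ)^2)⁻¹
          ≤ ∫ x in Ioc (0:ℝ) (1/ρ), (1 + x)⁻¹ := by
            apply integral_mono_of_nonneg
            · rw [Filter.EventuallyLE, MeasureTheory.ae_restrict_iff' measurableSet_Ioc]
              apply Filter.Eventually.of_forall
              intro x hx
              simp only [Pi.zero_apply]
              have hd1 : (0:ℝ) < 1 + x := by linarith [hx.1]
              have hd2 : (0:ℝ) < 1 + x * ρ := by nlinarith [hx.1]
              exact inv_nonneg.mpr (le_of_lt (mul_pos hd1 (pow_pos hd2 2)))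
            · apply IntegrableOn.mono_set _ (Set.Ioc_subset_Icc_self)
              apply ContinuousOn.integrableOn_Icc
              apply ContinuousOn.inv₀
              · fun_prop
              · intro x hx
                exact ne_of_gt (by linarith [hx.1])
            · rw [Filter.EventuallyLE, MeasureTheory.ae_restrict_iff' measurableSet_Ioc]
              exact Filter.Eventually.of_forall fun x hx => hpt x hx.1.le
      _ = Real.log (1 + 1/ρ) := int_log (by linarith)
    have p2 : ∫ x in Ioc (1/ρ) (s/2), ((1 + x) * (1 + x * ρ)^2)⁻¹ ≤ 1/2 := by
      have hpt2 : ∀ x ∈ Ioc (1/ρ) (s/2), ((1 + x) * (1 + x * ρ)^2)⁻¹ ≤ (ρ^2)⁻¹ * (x^3)⁻¹ := by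
        intro x hx
        have hx0 : 0 < x := lt_trans hρinv hx.1
        have hd1 : (0:ℝ) < 1 + x := by linarith
        have hd2 : (0:ℝ) < 1 + x * ρ := by nlinarith
        rw [← mul_inv, inv_le_inv₀ (by positivity) (by positivity)]
        have e1 : x ≤ 1 + x := by linarith
        have e2 : x * ρ ≤ 1 + x * ρ := by linarith
        have e3 : (x * ρ)^2 ≤ (1 + x * ρ)^2 := by nlinarith
        calc ρ^2 * x^3 = x * (x * ρ)^2 := by ring
        _ ≤ (1 + x) * (1 + x * ρ)^2 := by nlinarith
      calc ∫ x in Ioc (1/ρ) (s/2), ((1 + x) * (1 + x * ρ)^2)⁻¹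
          ≤ ∫ x in Ioc (1/ρ) (s/2), (ρ^2)⁻¹ * (x^3)⁻¹ := by
            apply integral_mono_of_nonneg
            · rw [Filter.EventuallyLE, MeasureTheory.ae_restrict_iff' measurableSet_Ioc]
              apply Filter.Eventually.of_forall
              intro x hx
              simp only [Pi.zero_apply]
              have hd1 : (0:ℝ) < 1 + x := by linarith [hx.1]
              have hd2 : (0:ℝ) < 1 + x * ρ := by nlinarith [hx.1]
              exact inv_nonneg.mpr (le_of_lt (mul_pos hd1 (pow_pos hd2 2)))
            · apply IntegrableOn.mono_set _ (Set.Ioc_subset_Icc_self)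
              apply ContinuousOn.integrableOn_Icc
              apply ContinuousOn.mul continuousOn_const
              apply ContinuousOn.inv₀
              · fun_prop
              · intro x hx
                have : 0 < x := lt_of_lt_of_le hρinv hx.1
                positivity
            · rw [Filter.EventuallyLE, MeasureTheory.ae_restrict_iff' measurableSet_Ioc]
              exact Filter.Eventually.of_forall hpt2
      _ = (ρ^2)⁻¹ * ∫ x in Ioc (1/ρ) (s/2), (x^3)⁻¹ := MeasureTheory.integral_const_mul _ _
      _ ≤ (ρ^2)⁻¹ * (((1/ρ)^2)⁻¹ / 2) := by
          apply mul_le_mul_of_nonneg_left (int_cube hρinv (le_of_lt hc)) (by positivity)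
      _ = 1/2 := by
          field_simp
    unfold ell
    linarith [p1, p2, hell]

lemma inv_le_scaled {A B c : ℝ} (hA : 0 < A) (hB : 0 < B) (h : B ≤ c * A) :
    A⁻¹ ≤ c * B⁻¹ := by
  have : c * B⁻¹ = c / B := by rw [div_eq_mul_inv]
  rw [this, inv_eq_one_div, div_le_div_iff₀ hA hB]
  linarith

lemma Vbd_double {s x ρ : ℝ} (hρ : 0 ≤ ρ) (hx0 : 0 ≤ x) (hx : s/2 ≤ x) (hxs : x ≤ s) :
    Vbd x ρ ≤ 8 * Vbd s ρ := by
  have hs0 : 0 ≤ s := le_trans hx0 hxs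
  have hx1 : (0:ℝ) < 1 + x := by linarith
  have hs1 : (0:ℝ) < 1 + s := by linarith
  have hxρ : (0:ℝ) < 1 + x * ρ := by nlinarith
  have hsρ : (0:ℝ) < 1 + s * ρ := by nlinarith
  have h1 : 1 + s ≤ 2 * (1 + x) := by linarith
  have h2 : 1 + s * ρ ≤ 2 * (1 + x * ρ) := by nlinarith
  have h3 : (1 + s * ρ)^2 ≤ (2 * (1 + x * ρ))^2 := by nlinarith
  have hb8 : (1 + s) * (1 + s * ρ)^2 ≤ 8 * ((1 + x) * (1 + x * ρ)^2) := by
    calc (1 + s) * (1 + s * ρ)^2 ≤ (2 * (1 + x)) * ((2 * (1 + x * ρ))^2) := by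
          apply mul_le_mul h1 h3 (sq_nonneg _) (by linarith)
    _ = 8 * ((1 + x) * (1 + x * ρ)^2) := by ring
  have hb2 : (1 + s)^2 ≤ 8 * (1 + x)^2 := by nlinarith
  have i1 : ((1 + x) * (1 + x * ρ)^2)⁻¹ ≤ 8 * ((1 + s) * (1 + s * ρ)^2)⁻¹ :=
    inv_le_scaled (by positivity) (by positivity) hb8
  have i2 : ((1 + x)^2)⁻¹ ≤ 8 * ((1 + s)^2)⁻¹ :=
    inv_le_scaled (by positivity) (by positivity) hb2
  unfold Vbd
  have hell := ell_nonneg hρ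
  have := mul_le_mul_of_nonneg_left i2 hell
  linarith

lemma contVbd {s ρ : ℝ} (hρ : 0 ≤ ρ) : ContinuousOn (fun x => Vbd x ρ) (Icc 0 s) := by
  unfold Vbd
  apply ContinuousOn.add
  · apply ContinuousOn.inv₀
    · fun_prop
    · intro x hx
      have hx1 : (0:ℝ) < 1 + x := by linarith [hx.1]
      have hx2 : (0:ℝ) < 1 + x * ρ := by nlinarith [hx.1]
      exact ne_of_gt (mul_pos hx1 (pow_pos hx2 2))
  · apply ContinuousOn.mul continuousOn_const
    apply ContinuousOn.inv₀
    · fun_prop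
    · intro x hx
      exact ne_of_gt (pow_pos (by linarith [hx.1]) 2)

lemma closure_bound {s ρ : ℝ} (hs : 0 ≤ s) (h0 : 0 ≤ ρ) (h1 : ρ ≤ 1) :
    ∫ x in Ioc (0:ℝ) s, ((1 + (s - x))^2)⁻¹ * Vbd x ρ ≤ 20 * Vbd s ρ := by
  have hs1 : (0:ℝ) < 1 + s := by linarith
  have hsρ : (0:ℝ) < 1 + s * ρ := by nlinarith
  have hV : 0 ≤ Vbd s ρ := Vbd_nonneg hs h0
  have hell := ell_nonneg h0
  -- continuity of the full integrand on [0,s]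
  have contF : ContinuousOn (fun x => ((1 + (s - x))^2)⁻¹ * Vbd x ρ) (Icc 0 s) := by
    apply ContinuousOn.mul
    · apply ContinuousOn.inv₀
      · fun_prop
      · intro x hx
        exact ne_of_gt (pow_pos (by linarith [hx.2]) 2)
    · exact contVbd h0
  have hi1 : IntegrableOn (fun x => ((1 + (s - x))^2)⁻¹ * Vbd x ρ) (Ioc 0 (s/2)) := by
    apply IntegrableOn.mono_set _ (Set.Ioc_subset_Icc_self)
    exact (contF.mono (Set.Icc_subset_Icc (le_refl _) (by linarith))).integrableOn_Icc
  have hi2 : IntegrableOn (fun x => ((1 + (s - x))^2)⁻¹ * Vbd x ρ) (Ioc (s/2) s) := by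
    apply IntegrableOn.mono_set _ (Set.Ioc_subset_Icc_self)
    exact (contF.mono (Set.Icc_subset_Icc (by linarith) (le_refl _))).integrableOn_Icc
  rw [← Set.Ioc_union_Ioc_eq_Ioc (by linarith : (0:ℝ) ≤ s/2) (by linarith : s/2 ≤ s)]
  rw [setIntegral_union (Set.Ioc_disjoint_Ioc_of_le le_rfl) measurableSet_Ioc hi1 hi2]
  -- piece 2
  have p2 : ∫ x in Ioc (s/2) s, ((1 + (s - x))^2)⁻¹ * Vbd x ρ ≤ 8 * Vbd s ρ := by
    have step : ∫ x in Ioc (s/2) s, ((1 + (s - x))^2)⁻¹ * Vbd x ρ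
        ≤ ∫ x in Ioc (s/2) s, ((1 + (s - x))^2)⁻¹ * (8 * Vbd s ρ) := by
      apply integral_mono_of_nonneg
      · rw [Filter.EventuallyLE, MeasureTheory.ae_restrict_iff' measurableSet_Ioc]
        apply Filter.Eventually.of_forall
        intro x hx
        simp only [Pi.zero_apply]
        have h1' : (0:ℝ) < 1 + (s - x) := by linarith [hx.2]
        have h2' : 0 ≤ Vbd x ρ := Vbd_nonneg (by linarith [hx.1]) h0
        positivity
      · apply Integrable.mul_const
        apply IntegrableOn.mono_set _ (Set.Ioc_subset_Icc_self)
        apply ContinuousOn.integrableOn_Icc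
        apply ContinuousOn.inv₀
        · fun_prop
        · intro x hx
          exact ne_of_gt (pow_pos (by linarith [hx.2]) 2)
      · rw [Filter.EventuallyLE, MeasureTheory.ae_restrict_iff' measurableSet_Ioc]
        apply Filter.Eventually.of_forall
        intro x hx
        have h1' : (0:ℝ) ≤ ((1 + (s - x))^2)⁻¹ := by
          have : (0:ℝ) < 1 + (s - x) := by linarith [hx.2]
          positivity
        exact mul_le_mul_of_nonneg_left
          (Vbd_double h0 (by linarith [hx.1]) hx.1.le hx.2) h1'
    refine step.trans ?_
    rw [MeasureTheory.integral_mul_const]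
    have := tail_piece (s := s) (c := s/2) (by linarith)
    nlinarith [this, hV]
  -- piece 1
  have p1 : ∫ x in Ioc (0:ℝ) (s/2), ((1 + (s - x))^2)⁻¹ * Vbd x ρ ≤ 12 * Vbd s ρ := by
    have step : ∫ x in Ioc (0:ℝ) (s/2), ((1 + (s - x))^2)⁻¹ * Vbd x ρ
        ≤ ∫ x in Ioc (0:ℝ) (s/2), (4 * ((1 + s)^2)⁻¹) * Vbd x ρ := by
      apply integral_mono_of_nonneg
      · rw [Filter.EventuallyLE, MeasureTheory.ae_restrict_iff' measurableSet_Ioc]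
        apply Filter.Eventually.of_forall
        intro x hx
        simp only [Pi.zero_apply]
        have h1' : (0:ℝ) < 1 + (s - x) := by linarith [hx.2]
        have h2' : 0 ≤ Vbd x ρ := Vbd_nonneg (by linarith [hx.1]) h0
        positivity
      · apply Integrable.const_mul
        apply IntegrableOn.mono_set _ (Set.Ioc_subset_Icc_self)
        exact ((contVbd (s := s) h0).mono (Set.Icc_subset_Icc (le_refl _) (by linarith : s/2 ≤ s))).integrableOn_Icc
      · rw [Filter.EventuallyLE, MeasureTheory.ae_restrict_iff' measurableSet_Ioc]
        apply Filter.Eventually.of_forall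
        intro x hx
        have h2' : 0 ≤ Vbd x ρ := Vbd_nonneg (by linarith [hx.1]) h0
        apply mul_le_mul_of_nonneg_right _ h2'
        have hgap : (0:ℝ) < 1 + (s - x) := by linarith [hx.2]
        have hlin : 1 + s ≤ 2 * (1 + (s - x)) := by linarith [hx.2]
        have hkey : (1 + s)^2 ≤ 4 * (1 + (s - x))^2 := by nlinarith
        exact inv_le_scaled (pow_pos hgap 2) (pow_pos hs1 2) hkey
    refine step.trans ?_
    rw [MeasureTheory.integral_const_mul]
    -- now bound ∫ Vbd over Ioc 0 (s/2)
    have hVsplit : ∀ x : ℝ, Vbd x ρ = ((1 + x) * (1 + x * ρ)^2)⁻¹ + ell ρ * ((1 + x)^2)⁻¹ :=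
      fun x => rfl
    have hint1 : IntegrableOn (fun x : ℝ => ((1 + x) * (1 + x * ρ)^2)⁻¹) (Ioc 0 (s/2)) := by
      apply IntegrableOn.mono_set _ (Set.Ioc_subset_Icc_self)
      apply ContinuousOn.integrableOn_Icc
      apply ContinuousOn.inv₀
      · fun_prop
      · intro x hx
        have hx1 : (0:ℝ) < 1 + x := by linarith [hx.1]
        have hx2 : (0:ℝ) < 1 + x * ρ := by nlinarith [hx.1]
        exact ne_of_gt (mul_pos hx1 (pow_pos hx2 2))
    have hint2 : IntegrableOn (fun x : ℝ => ell ρ * ((1 + x)^2)⁻¹) (Ioc 0 (s/2)) := by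
      apply Integrable.const_mul
      apply IntegrableOn.mono_set _ (Set.Ioc_subset_Icc_self)
      apply ContinuousOn.integrableOn_Icc
      apply ContinuousOn.inv₀
      · fun_prop
      · intro x hx
        exact ne_of_gt (pow_pos (by linarith [hx.1]) 2)
    have hJ2 : ∫ x in Ioc (0:ℝ) (s/2), ell ρ * ((1 + x)^2)⁻¹ ≤ ell ρ := by
      rw [MeasureTheory.integral_const_mul]
      calc ell ρ * ∫ x in Ioc (0:ℝ) (s/2), ((1 + x)^2)⁻¹ ≤ ell ρ * 1 :=
            mul_le_mul_of_nonneg_left (int_inv_sq (by linarith)) hell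
      _ = ell ρ := by ring
    have hsplit : ∫ x in Ioc (0:ℝ) (s/2), Vbd x ρ
        = (∫ x in Ioc (0:ℝ) (s/2), ((1 + x) * (1 + x * ρ)^2)⁻¹)
          + ∫ x in Ioc (0:ℝ) (s/2), ell ρ * ((1 + x)^2)⁻¹ := by
      simp only [hVsplit]
      exact MeasureTheory.integral_add hint1 hint2
    rcases eq_or_lt_of_le h0 with hρ0 | hρ0
    · -- ρ = 0
      have hJ1 : ∫ x in Ioc (0:ℝ) (s/2), ((1 + x) * (1 + x * ρ)^2)⁻¹ ≤ s/2 := by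
        have hb : ∫ x in Ioc (0:ℝ) (s/2), ((1 + x) * (1 + x * ρ)^2)⁻¹
            ≤ ∫ x in Ioc (0:ℝ) (s/2), (1:ℝ) := by
          apply integral_mono_of_nonneg
          · rw [Filter.EventuallyLE, MeasureTheory.ae_restrict_iff' measurableSet_Ioc]
            apply Filter.Eventually.of_forall
            intro x hx
            simp only [Pi.zero_apply]
            have hx1 : (0:ℝ) < 1 + x := by linarith [hx.1]
            have hx2 : (0:ℝ) < 1 + x * ρ := by nlinarith [hx.1]
            exact inv_nonneg.mpr (le_of_lt (mul_pos hx1 (pow_pos hx2 2)))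
          · exact integrableOn_const measure_Ioc_lt_top.ne
          · rw [Filter.EventuallyLE, MeasureTheory.ae_restrict_iff' measurableSet_Ioc]
            apply Filter.Eventually.of_forall
            intro x hx
            have hx1 : (0:ℝ) < 1 + x := by linarith [hx.1]
            have hx2 : (0:ℝ) < 1 + x * ρ := by nlinarith [hx.1]
            have hA : (0:ℝ) < (1 + x) * (1 + x * ρ)^2 := mul_pos hx1 (pow_pos hx2 2)
            have hprod : 1 ≤ (1 + x) * (1 + x * ρ)^2 := by
              nlinarith [mul_nonneg hx.1.le h0, sq_nonneg (x * ρ), hx.1.le]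
            calc ((1 + x) * (1 + x * ρ)^2)⁻¹ ≤ (1:ℝ)⁻¹ := by
                  rw [inv_le_inv₀ hA one_pos]; exact hprod
            _ = 1 := inv_one
        refine hb.trans ?_
        rw [setIntegral_const]
        simp [Real.volume_Ioc]
        linarith
      -- Vbd s ρ with ρ = 0 : first term is (1+s)⁻¹
      have hVs : Vbd s ρ = (1 + s)⁻¹ + ell ρ * ((1 + s)^2)⁻¹ := by
        rw [hVsplit s, ← hρ0]
        norm_num
      have hfirst : 4 * ((1 + s)^2)⁻¹ * (s/2) ≤ 2 * (1 + s)⁻¹ := by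
        have : (1 + s)^2 = (1+s)*(1+s) := by ring
        rw [this, mul_inv]
        have h2 : 4 * ((1+s)⁻¹ * (1+s)⁻¹) * (s/2) = 2 * (1+s)⁻¹ * (s * (1+s)⁻¹) := by ring
        rw [h2]
        have h3 : s * (1+s)⁻¹ ≤ 1 := by
          rw [← div_eq_mul_inv, div_le_one hs1]; linarith
        nlinarith [inv_nonneg.mpr hs1.le]
      calc 4 * ((1 + s)^2)⁻¹ * ∫ x in Ioc (0:ℝ) (s/2), Vbd x ρ
          ≤ 4 * ((1 + s)^2)⁻¹ * (s/2 + ell ρ) := by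
            apply mul_le_mul_of_nonneg_left _ (by positivity)
            rw [hsplit]; linarith
      _ = 4 * ((1 + s)^2)⁻¹ * (s/2) + 4 * ell ρ * ((1 + s)^2)⁻¹ := by ring
      _ ≤ 2 * (1 + s)⁻¹ + 4 * ell ρ * ((1 + s)^2)⁻¹ := by linarith
      _ ≤ 12 * Vbd s ρ := by
          rw [hVs]
          have t1 : (0:ℝ) ≤ (1+s)⁻¹ := by positivity
          have t2 : (0:ℝ) ≤ ell ρ * ((1 + s)^2)⁻¹ := by positivity
          linarith
    · -- ρ > 0
      have hJ1 := A_bound hs hρ0 h1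
      calc 4 * ((1 + s)^2)⁻¹ * ∫ x in Ioc (0:ℝ) (s/2), Vbd x ρ
          ≤ 4 * ((1 + s)^2)⁻¹ * (2 * ell ρ) := by
            apply mul_le_mul_of_nonneg_left _ (by positivity)
            rw [hsplit]; linarith
      _ = 8 * (ell ρ * ((1 + s)^2)⁻¹) := by ring
      _ ≤ 12 * Vbd s ρ := by
          unfold Vbd
          have t1 : (0:ℝ) ≤ ((1 + s) * (1 + s * ρ)^2)⁻¹ := by positivity
          have t2 : (0:ℝ) ≤ ell ρ * ((1 + s)^2)⁻¹ := by positivity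
          linarith
  linarith


lemma Qn_nonneg : ∀ (n : ℕ) (s h h' : ℝ), 0 ≤ Qn n s h h' := by
  intro n
  induction n with
  | zero => intro s h h'; exact le_of_eq rfl
  | succ m ih =>
    cases m with
    | zero => intro s h h'; exact Qker_nonneg s h h'
    | succ k =>
      intro s h h'
      show (0:ℝ) ≤ ∫ s' in Set.Ioc (0:ℝ) s, ∫ h'' in Set.Icc (-1:ℝ) 1,
        Qker (s - s') h h'' * Qn (k + 1) s' h'' h'
      apply integral_nonneg
      intro x
      apply integral_nonneg
      intro y
      exact mul_nonneg (Qker_nonneg _ _ _) (ih x y h')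

lemma Qker_integrableOn {u h : ℝ} (hu : 0 ≤ u) :
    IntegrableOn (fun x => Qker u h x) (Icc (-1:ℝ) 1) := by
  apply Integrable.mono' (integrable_const (72 / Real.pi ^ 2))
    ((measurable_Qker u h).aestronglyMeasurable)
  rw [MeasureTheory.ae_restrict_iff' measurableSet_Icc]
  apply Filter.Eventually.of_forall
  intro x hx
  rw [Real.norm_eq_abs, abs_of_nonneg (Qker_nonneg u h x)]
  have hx1 : |x| ≤ 1 := abs_le.mpr ⟨hx.1, hx.2⟩
  refine (Qker_le hu hx1).trans ?_
  have hD : (0:ℝ) < (1 + u) * (1 + u * (1 - |x|))^2 := by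
    have h1 : (0:ℝ) < 1 + u := by linarith
    have h2 : (0:ℝ) < 1 + u * (1 - |x|) := by nlinarith
    positivity
  rw [div_le_iff₀ hD]
  have h1 : (1:ℝ) ≤ 1 + u := by linarith
  have h2 : (1:ℝ) ≤ 1 + u * (1 - |x|) := by nlinarith
  have hP : (1:ℝ) ≤ (1 + u) * (1 + u * (1 - |x|))^2 := by nlinarith
  have hK : (0:ℝ) ≤ 72 / Real.pi ^ 2 := by positivity
  nlinarith [mul_nonneg hK (sub_nonneg.mpr hP)]

lemma integrandF_integrable {s ρ : ℝ} (hs : 0 ≤ s) (h0 : 0 ≤ ρ) :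
    IntegrableOn (fun x => ((1 + (s - x))^2)⁻¹ * Vbd x ρ) (Ioc 0 s) := by
  apply IntegrableOn.mono_set _ (Set.Ioc_subset_Icc_self)
  apply ContinuousOn.integrableOn_Icc
  apply ContinuousOn.mul
  · apply ContinuousOn.inv₀
    · fun_prop
    · intro x hx
      exact ne_of_gt (pow_pos (by linarith [hx.2]) 2)
  · exact contVbd h0

lemma Qn_le : ∀ n : ℕ, ∃ C : ℝ, 0 < C ∧ ∀ s h h' : ℝ, 0 ≤ s → |h'| ≤ 1 →
    Qn (n+1) s h h' ≤ C * Vbd s (1 - |h'|) := by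
  intro n
  induction n with
  | zero =>
    refine ⟨72 / Real.pi ^ 2, by positivity, ?_⟩
    intro s h h' hs hh'
    have hρ0 : (0:ℝ) ≤ 1 - |h'| := by linarith
    have hb := Qker_le (h := h) hs hh'
    have hVbd1 : 72 / Real.pi^2 / ((1+s)*(1+s*(1-|h'|))^2)
        ≤ 72 / Real.pi^2 * Vbd s (1-|h'|) := by
      unfold Vbd
      rw [div_eq_mul_inv]
      have t2 : (0:ℝ) ≤ ell (1-|h'|) * ((1+s)^2)⁻¹ :=
        mul_nonneg (ell_nonneg hρ0) (by positivity)
      have hK : (0:ℝ) ≤ 72 / Real.pi ^ 2 := by positivity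
      nlinarith
    exact le_trans hb hVbd1
  | succ k ih =>
    obtain ⟨C, hC, hIH⟩ := ih
    refine ⟨2880 / Real.pi ^ 2 * C, by positivity, ?_⟩
    intro s h h' hs hh'
    set ρ := 1 - |h'| with hρ
    have hρ0 : (0:ℝ) ≤ ρ := by rw [hρ]; linarith
    have hρ1 : ρ ≤ 1 := by rw [hρ]; linarith [abs_nonneg h']
    show (∫ s' in Set.Ioc (0:ℝ) s, ∫ h'' in Set.Icc (-1:ℝ) 1,
        Qker (s - s') h h'' * Qn (k + 1) s' h'' h') ≤ 2880 / Real.pi ^ 2 * C * Vbd s ρ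
    -- step A : pointwise bound on inner integral
    have stepA : ∀ s' ∈ Ioc (0:ℝ) s,
        (∫ h'' in Set.Icc (-1:ℝ) 1, Qker (s - s') h h'' * Qn (k + 1) s' h'' h')
          ≤ (144 / Real.pi ^ 2 * C) * (((1 + (s - s'))^2)⁻¹ * Vbd s' ρ) := by
      intro s' hs'
      have hu : (0:ℝ) ≤ s - s' := by linarith [hs'.2]
      have hVnn : 0 ≤ Vbd s' ρ := Vbd_nonneg hs'.1.le hρ0
      have inner1 : (∫ h'' in Set.Icc (-1:ℝ) 1, Qker (s - s') h h'' * Qn (k + 1) s' h'' h')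
          ≤ ∫ h'' in Set.Icc (-1:ℝ) 1, Qker (s - s') h h'' * (C * Vbd s' ρ) := by
        apply integral_mono_of_nonneg
        · apply Filter.Eventually.of_forall
          intro x
          exact mul_nonneg (Qker_nonneg _ _ _) (Qn_nonneg _ _ _ _)
        · exact (Qker_integrableOn (h := h) hu).mul_const _
        · rw [Filter.EventuallyLE, MeasureTheory.ae_restrict_iff' measurableSet_Icc]
          apply Filter.Eventually.of_forall
          intro x hx
          apply mul_le_mul_of_nonneg_left _ (Qker_nonneg _ _ _)
          exact hIH s' x h' hs'.1.le hh'
      refine inner1.trans ?_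
      rw [MeasureTheory.integral_mul_const]
      have hmarg := Qker_marg (h := h) hu
      have hCV : (0:ℝ) ≤ C * Vbd s' ρ := mul_nonneg hC.le hVnn
      calc (∫ h'' in Set.Icc (-1:ℝ) 1, Qker (s - s') h h'') * (C * Vbd s' ρ)
          ≤ (144 / Real.pi ^ 2 / (1 + (s - s'))^2) * (C * Vbd s' ρ) :=
            mul_le_mul_of_nonneg_right hmarg hCV
      _ = (144 / Real.pi ^ 2 * C) * (((1 + (s - s'))^2)⁻¹ * Vbd s' ρ) := by
          rw [div_eq_mul_inv]; ring
    -- step B : integrate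
    have stepB : (∫ s' in Set.Ioc (0:ℝ) s, ∫ h'' in Set.Icc (-1:ℝ) 1,
        Qker (s - s') h h'' * Qn (k + 1) s' h'' h')
        ≤ ∫ s' in Set.Ioc (0:ℝ) s,
            (144 / Real.pi ^ 2 * C) * (((1 + (s - s'))^2)⁻¹ * Vbd s' ρ) := by
      apply integral_mono_of_nonneg
      · apply Filter.Eventually.of_forall
        intro x
        apply integral_nonneg
        intro y
        exact mul_nonneg (Qker_nonneg _ _ _) (Qn_nonneg _ _ _ _)
      · exact (integrandF_integrable hs hρ0).const_mul _
      · rw [Filter.EventuallyLE, MeasureTheory.ae_restrict_iff' measurableSet_Ioc]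
        exact Filter.Eventually.of_forall stepA
    refine stepB.trans ?_
    rw [MeasureTheory.integral_const_mul]
    have hcl := closure_bound hs hρ0 hρ1
    calc (144 / Real.pi ^ 2 * C) * ∫ s' in Set.Ioc (0:ℝ) s, ((1 + (s - s'))^2)⁻¹ * Vbd s' ρ
        ≤ (144 / Real.pi ^ 2 * C) * (20 * Vbd s ρ) :=
          mul_le_mul_of_nonneg_left hcl (by positivity)
    _ = 2880 / Real.pi ^ 2 * C * Vbd s ρ := by ring

lemma rpow_half_pieces :
    IntegrableOn (fun t : ℝ => (1 - |t|) ^ (-(1/2) : ℝ)) (Icc (-1:ℝ) 1)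
    ∧ (∫ t in Icc (-1:ℝ) 1, (1 - |t|) ^ (-(1/2) : ℝ)) = 4 := by
  have II0 : IntervalIntegrable (fun x : ℝ => x ^ (-(1/2) : ℝ)) volume 0 1 :=
    intervalIntegral.intervalIntegrable_rpow' (by norm_num)
  have val0 : ∫ x in (0:ℝ)..1, x ^ (-(1/2) : ℝ) = 2 := by
    rw [integral_rpow (Or.inl (by norm_num))]
    norm_num
  -- piece on (0,1] : (1-t)^(-1/2)
  have II1 : IntervalIntegrable (fun t : ℝ => (1 - t) ^ (-(1/2) : ℝ)) volume 0 1 := by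
    have := (II0.comp_sub_left 1).symm
    simpa using this
  have val1 : ∫ t in (0:ℝ)..1, (1 - t) ^ (-(1/2) : ℝ) = 2 := by
    have := intervalIntegral.integral_comp_sub_left (a := (0:ℝ)) (b := 1)
      (fun x : ℝ => x ^ (-(1/2) : ℝ)) 1
    norm_num at this
    rw [this]  -- might need adjusting
    exact val0
  -- piece on (-1,0] : (t+1)^(-1/2)
  have II2 : IntervalIntegrable (fun t : ℝ => (t + 1) ^ (-(1/2) : ℝ)) volume (-1) 0 := by
    have := II0.comp_add_right 1
    simpa using this
  have val2 : ∫ t in (-1:ℝ)..0, (t + 1) ^ (-(1/2) : ℝ) = 2 := by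
    have := intervalIntegral.integral_comp_add_right (a := (-1:ℝ)) (b := 0)
      (fun x : ℝ => x ^ (-(1/2) : ℝ)) 1
    norm_num at this
    rw [this]
    exact val0
  have e1 : EqOn (fun t : ℝ => (1 - |t|) ^ (-(1/2) : ℝ))
      (fun t : ℝ => (1 - t) ^ (-(1/2) : ℝ)) (Ioc 0 1) := by
    intro t ht
    simp only
    rw [abs_of_pos ht.1]
  have e2 : EqOn (fun t : ℝ => (1 - |t|) ^ (-(1/2) : ℝ))
      (fun t : ℝ => (t + 1) ^ (-(1/2) : ℝ)) (Ioc (-1) 0) := by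
    intro t ht
    simp only
    rw [abs_of_nonpos ht.2]
    ring_nf
  have int1 : IntegrableOn (fun t : ℝ => (1 - |t|) ^ (-(1/2) : ℝ)) (Ioc 0 1) := by
    apply IntegrableOn.congr_fun _ e1.symm measurableSet_Ioc
    exact (intervalIntegrable_iff_integrableOn_Ioc_of_le (by norm_num)).mp II1
  have int2 : IntegrableOn (fun t : ℝ => (1 - |t|) ^ (-(1/2) : ℝ)) (Ioc (-1) 0) := by
    apply IntegrableOn.congr_fun _ e2.symm measurableSet_Ioc
    exact (intervalIntegrable_iff_integrableOn_Ioc_of_le (by norm_num)).mp II2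
  constructor
  · rw [integrableOn_Icc_iff_integrableOn_Ioc]
    rw [← Set.Ioc_union_Ioc_eq_Ioc (by norm_num : (-1:ℝ) ≤ 0) (by norm_num : (0:ℝ) ≤ 1)]
    exact int2.union int1
  · rw [MeasureTheory.integral_Icc_eq_integral_Ioc]
    rw [← Set.Ioc_union_Ioc_eq_Ioc (by norm_num : (-1:ℝ) ≤ 0) (by norm_num : (0:ℝ) ≤ 1)]
    rw [setIntegral_union (Set.Ioc_disjoint_Ioc_of_le le_rfl) measurableSet_Ioc int2 int1]
    have q1 : ∫ t in Ioc (0:ℝ) 1, (1 - |t|) ^ (-(1/2) : ℝ) = 2 := by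
      rw [setIntegral_congr_fun measurableSet_Ioc e1]
      rw [← intervalIntegral.integral_of_le (by norm_num : (0:ℝ) ≤ 1)]
      exact val1
    have q2 : ∫ t in Ioc (-1:ℝ) 0, (1 - |t|) ^ (-(1/2) : ℝ) = 2 := by
      rw [setIntegral_congr_fun measurableSet_Ioc e2]
      rw [← intervalIntegral.integral_of_le (by norm_num : (-1:ℝ) ≤ 0)]
      exact val2
    rw [q1, q2]
    norm_num

lemma Vbd_h'_int {s : ℝ} (hs : 0 ≤ s) :
    IntegrableOn (fun t : ℝ => Vbd s (1 - |t|)) (Icc (-1:ℝ) 1)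
    ∧ (∫ t in Icc (-1:ℝ) 1, Vbd s (1 - |t|)) ≤ 16 * ((1 + s)^2)⁻¹ := by
  have hs1 : (0:ℝ) < 1 + s := by linarith
  have hterm1cont : ContinuousOn
      (fun t : ℝ => ((1 + s) * (1 + s * (1 - |t|))^2)⁻¹) (Icc (-1) 1) := by
    apply ContinuousOn.inv₀
    · fun_prop
    · intro x hx
      have hx1 : |x| ≤ 1 := abs_le.mpr ⟨hx.1, hx.2⟩
      have h2 : (0:ℝ) < 1 + s * (1 - |x|) := by nlinarith
      exact ne_of_gt (mul_pos hs1 (pow_pos h2 2))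
  have hint1 : IntegrableOn (fun t : ℝ => ((1 + s) * (1 + s * (1 - |t|))^2)⁻¹)
      (Icc (-1:ℝ) 1) := hterm1cont.integrableOn_Icc
  have hint2 : IntegrableOn (fun t : ℝ => ell (1 - |t|) * ((1 + s)^2)⁻¹)
      (Icc (-1:ℝ) 1) := by
    apply Integrable.mul_const
    unfold ell
    apply Integrable.add (integrable_const _)
    exact (rpow_half_pieces.1.const_mul 2)
  have hsplit : ∀ t : ℝ, Vbd s (1 - |t|)
      = ((1 + s) * (1 + s * (1 - |t|))^2)⁻¹ + ell (1 - |t|) * ((1 + s)^2)⁻¹ := fun t => rfl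
  constructor
  · have hsum : IntegrableOn (fun t : ℝ =>
        ((1 + s) * (1 + s * (1 - |t|))^2)⁻¹ + ell (1 - |t|) * ((1 + s)^2)⁻¹)
        (Icc (-1:ℝ) 1) := hint1.add hint2
    simpa only [← hsplit] using hsum
  · have heq : ∫ t in Icc (-1:ℝ) 1, Vbd s (1 - |t|)
        = (∫ t in Icc (-1:ℝ) 1, ((1 + s) * (1 + s * (1 - |t|))^2)⁻¹)
          + ∫ t in Icc (-1:ℝ) 1, ell (1 - |t|) * ((1 + s)^2)⁻¹ := by
      simp only [hsplit]
      exact MeasureTheory.integral_add hint1 hint2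
    rw [heq]
    have b1 : (∫ t in Icc (-1:ℝ) 1, ((1 + s) * (1 + s * (1 - |t|))^2)⁻¹)
        ≤ 2 * ((1 + s)^2)⁻¹ := by
      have hmi : ∀ t : ℝ, ((1 + s) * (1 + s * (1 - |t|))^2)⁻¹
          = (1 + s)⁻¹ * ((1 + s * (1 - |t|))^2)⁻¹ := fun t => by rw [mul_inv]
      simp only [hmi]
      rw [MeasureTheory.integral_const_mul]
      calc (1+s)⁻¹ * ∫ t in Icc (-1:ℝ) 1, ((1 + s * (1 - |t|))^2)⁻¹
          ≤ (1+s)⁻¹ * (2 / (1 + s)) :=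
            mul_le_mul_of_nonneg_left (inner_int_bound hs) (by positivity)
      _ = 2 * ((1 + s)^2)⁻¹ := by
          field_simp
    have b2 : (∫ t in Icc (-1:ℝ) 1, ell (1 - |t|) * ((1 + s)^2)⁻¹)
        ≤ 14 * ((1 + s)^2)⁻¹ := by
      rw [MeasureTheory.integral_mul_const]
      apply mul_le_mul_of_nonneg_right _ (by positivity)
      have hel : ∀ t : ℝ, ell (1 - |t|) = 3 + 2 * (1 - |t|) ^ (-(1/2) : ℝ) := fun t => rfl
      simp only [hel]
      rw [MeasureTheory.integral_add (integrable_const _) (rpow_half_pieces.1.const_mul 2)]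
      rw [MeasureTheory.integral_const_mul, rpow_half_pieces.2]
      rw [setIntegral_const]
      simp [Real.volume_Icc]
      norm_num
    linarith

lemma tail_int {s : ℝ} (hs : 0 ≤ s) :
    IntegrableOn (fun x : ℝ => ((1 + x)^2)⁻¹) (Ioi s)
    ∧ (∫ x in Ioi s, ((1 + x)^2)⁻¹) = (1 + s)⁻¹ := by
  have hderiv : ∀ x ∈ Ici s, HasDerivAt (fun x : ℝ => -(1 + x)⁻¹) (((1 + x)^2)⁻¹) x := by
    intro x hx
    have hx0 : s ≤ x := hx
    have hne : 1 + x ≠ 0 := ne_of_gt (by linarith)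
    have hg : HasDerivAt (fun x : ℝ => 1 + x) 1 x := by
      simpa using (hasDerivAt_id x).const_add 1
    have := (hg.inv hne).neg
    refine this.congr_deriv (Eq.symm ?_)
    rw [neg_div, neg_neg, one_div]
  have hpos : ∀ x ∈ Ioi s, (0:ℝ) ≤ ((1 + x)^2)⁻¹ := by
    intro x hx
    have : (0:ℝ) < 1 + x := by
      have := hx.out
      linarith
    positivity
  have htend : Filter.Tendsto (fun x : ℝ => -(1 + x)⁻¹) Filter.atTop (nhds 0) := by
    have h1 : Filter.Tendsto (fun x : ℝ => 1 + x) Filter.atTop Filter.atTop :=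
      Filter.tendsto_atTop_add_const_left _ 1 Filter.tendsto_id
    have h2 : Filter.Tendsto (fun x : ℝ => (1 + x)⁻¹) Filter.atTop (nhds 0) :=
      h1.inv_tendsto_atTop
    have h3 := h2.neg
    rw [neg_zero] at h3
    exact h3
  constructor
  · exact integrableOn_Ioi_deriv_of_nonneg' hderiv hpos htend
  · rw [MeasureTheory.integral_Ioi_of_hasDerivAt_of_nonneg' hderiv hpos htend]
    ring

/-- `E⁽ⁿ⁾(s,h) ≤ cₙ/(s+1)`. -/
theorem stmt7 :
    ∀ n : ℕ, 1 ≤ n → ∃ c : ℝ, 0 < c ∧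
      ∀ s : ℝ, 0 ≤ s → ∀ h ∈ Set.Icc (-1:ℝ) 1, En n s h ≤ c / (s + 1) := by
  intro n hn
  obtain ⟨m, rfl⟩ : ∃ m, n = m + 1 := ⟨n - 1, (Nat.succ_pred_eq_of_pos hn).symm⟩
  obtain ⟨C, hC, hQ⟩ := Qn_le m
  refine ⟨16 * C, by positivity, ?_⟩
  intro s hs h _
  have hEn : En (m+1) s h = ∫ s' in Set.Ioi s, ∫ h' in Set.Icc (-1:ℝ) 1, Qn (m+1) s' h h' :=
    rfl
  rw [hEn]
  have inner : ∀ s' ∈ Ioi s,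
      (∫ h' in Set.Icc (-1:ℝ) 1, Qn (m+1) s' h h') ≤ (16 * C) * ((1 + s')^2)⁻¹ := by
    intro s' hs'
    have hs'0 : (0:ℝ) ≤ s' := le_trans hs (le_of_lt hs'.out)
    have step : (∫ h' in Set.Icc (-1:ℝ) 1, Qn (m+1) s' h h')
        ≤ ∫ h' in Set.Icc (-1:ℝ) 1, C * Vbd s' (1 - |h'|) := by
      apply integral_mono_of_nonneg
      · exact Filter.Eventually.of_forall fun x => Qn_nonneg _ _ _ _
      · exact (Vbd_h'_int hs'0).1.const_mul C
      · rw [Filter.EventuallyLE, MeasureTheory.ae_restrict_iff' measurableSet_Icc]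
        apply Filter.Eventually.of_forall
        intro x hx
        exact hQ s' h x hs'0 (abs_le.mpr ⟨hx.1, hx.2⟩)
    refine step.trans ?_
    rw [MeasureTheory.integral_const_mul]
    calc C * ∫ h' in Set.Icc (-1:ℝ) 1, Vbd s' (1 - |h'|)
        ≤ C * (16 * ((1 + s')^2)⁻¹) := mul_le_mul_of_nonneg_left (Vbd_h'_int hs'0).2 hC.le
    _ = (16 * C) * ((1 + s')^2)⁻¹ := by ring
  have outer : (∫ s' in Set.Ioi s, ∫ h' in Set.Icc (-1:ℝ) 1, Qn (m+1) s' h h')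
      ≤ ∫ s' in Set.Ioi s, (16 * C) * ((1 + s')^2)⁻¹ := by
    apply integral_mono_of_nonneg
    · apply Filter.Eventually.of_forall
      intro x
      apply integral_nonneg
      intro y
      exact Qn_nonneg _ _ _ _
    · exact (tail_int hs).1.const_mul _
    · rw [Filter.EventuallyLE, MeasureTheory.ae_restrict_iff' measurableSet_Ioi]
      exact Filter.Eventually.of_forall inner
  refine outer.trans ?_
  rw [MeasureTheory.integral_const_mul, (tail_int hs).2]
  rw [div_eq_mul_inv]
  rw [show s + 1 = 1 + s from by ring]
end

section
/- The support of E in [0,∞) × [-1,1] equals the set {(s,h) : h ∈ [-1,1], 0 ≤ s ≤ 1/(1−|h|)}; in particular E(s,h) > 0 for all h ∈ [-1,1] and 0 ≤ s < 1, and E(s,h) = 0 if and only if s ≥ 1/(1−|h|). -/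
open MeasureTheory Real Set

namespace Stmt9Aux

local notation "C6" => (6 / Real.pi ^ 2 : ℝ)

lemma c_pos : (0:ℝ) < C6 := by positivity

lemma qcore_aux {s a b : ℝ} (hab : |b| ≤ a) (hc1 : ¬(0 ≤ s ∧ s ≤ 1 / (1 + a)))
    (hc2 : 1 / (1 + a) < s ∧ s ≤ 1 / (1 + b)) :
    0 < s ∧ 0 < 1 + b ∧ 1 + b ≤ 1 / s ∧ 1 / s < 1 + a ∧ 0 < a - b := by
  have ha : 0 ≤ a := le_trans (abs_nonneg b) hab
  have ha1 : 0 < 1 + a := by linarith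
  have hs0 : 0 < s := lt_of_le_of_lt (le_of_lt (one_div_pos.mpr ha1)) hc2.1
  have hb1 : 0 < 1 + b := by
    by_contra hc
    push_neg at hc
    have h0 : 1 / (1 + b) ≤ 0 := one_div_nonpos.mpr hc
    linarith [hc2.2]
  have h1 : 1 + b ≤ 1 / s := by
    rw [le_div_iff₀ hs0]
    have := hc2.2
    rw [le_div_iff₀ hb1] at this
    linarith
  have h2 : 1 / s < 1 + a := by
    have := one_div_lt_one_div_of_lt (one_div_pos.mpr ha1) hc2.1
    rwa [one_div_one_div] at this
  exact ⟨hs0, hb1, h1, h2, by linarith⟩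

lemma qcore_nonneg {a b : ℝ} (hab : |b| ≤ a) (s : ℝ) : 0 ≤ Qcore s a b := by
  unfold Qcore
  split_ifs with c1 c2
  · positivity
  · obtain ⟨hs0, hb1, h1, h2, hd⟩ := qcore_aux hab c1 c2
    have hnum : 0 ≤ 1 / s - (1 + b) := by linarith
    positivity
  · exact le_refl 0

lemma qcore_le {a b : ℝ} (hab : |b| ≤ a) (s : ℝ) : Qcore s a b ≤ C6 := by
  unfold Qcore
  split_ifs with c1 c2
  · exact le_refl _
  · obtain ⟨hs0, hb1, h1, h2, hd⟩ := qcore_aux hab c1 c2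
    have : (1 / s - (1 + b)) / (a - b) ≤ 1 := by
      rw [div_le_one hd]; linarith
    calc C6 * ((1 / s - (1 + b)) / (a - b)) ≤ C6 * 1 :=
          mul_le_mul_of_nonneg_left this (le_of_lt c_pos)
      _ = C6 := mul_one _
  · exact le_of_lt c_pos

lemma qker_valid4 {h h' : ℝ} (c1 : ¬|h'| ≤ h) (c2 : ¬|h| ≤ h') (c3 : ¬|h'| ≤ -h) :
    |(-h)| ≤ -h' := by
  push_neg at c1 c2 c3
  have hh : |h| < |h'| := abs_lt.mpr ⟨by linarith, c1⟩
  have h'neg : h' < 0 := by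
    by_contra hc
    push_neg at hc
    rw [abs_of_nonneg hc] at hh
    linarith
  rw [abs_of_neg h'neg] at hh
  rw [abs_neg]
  linarith

lemma qker_nonneg (s h h' : ℝ) : 0 ≤ Qker s h h' := by
  unfold Qker
  split_ifs with c1 c2 c3
  · exact qcore_nonneg c1 s
  · exact qcore_nonneg c2 s
  · exact qcore_nonneg (by rwa [abs_neg]) s
  · exact qcore_nonneg (qker_valid4 c1 c2 c3) s

lemma qker_le (s h h' : ℝ) : Qker s h h' ≤ C6 := by
  unfold Qker
  split_ifs with c1 c2 c3
  · exact qcore_le c1 s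
  · exact qcore_le c2 s
  · exact qcore_le (by rwa [abs_neg]) s
  · exact qcore_le (qker_valid4 c1 c2 c3) s

lemma qcore_zero_of {s a b : ℝ} (hA : 1 / (1 + a) < s) (hB : 1 / (1 + b) < s) :
    Qcore s a b = 0 := by
  unfold Qcore
  split_ifs with c1 c2
  · exact absurd c1.2 (not_le.mpr hA)
  · exact absurd c2.2 (not_le.mpr hB)
  · rfl

lemma qker_zero {h : ℝ} (h' s : ℝ) (hh : |h| < 1) (hs : 1 / (1 - |h|) < s) :
    Qker s h h' = 0 := by
  have hpos : (0:ℝ) < 1 - |h| := by linarith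
  have key : ∀ x : ℝ, -|h| ≤ x → 1 / (1 + x) < s := by
    intro x hx
    exact lt_of_le_of_lt (one_div_le_one_div_of_le hpos (by linarith)) hs
  unfold Qker
  split_ifs with c1 c2 c3
  · refine qcore_zero_of (key h (neg_abs_le h)) (key h' ?_)
    have : -h' ≤ |h'| := neg_le_abs h'
    have : h ≤ |h| := le_abs_self h
    linarith [c1]
  · exact qcore_zero_of (key h' (by linarith [neg_abs_le h, c2, abs_nonneg h])) (key h (neg_abs_le h))
  · refine qcore_zero_of (key (-h) (by linarith [le_abs_self h])) (key (-h') ?_)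
    have h1 : h' ≤ |h'| := le_abs_self h'
    have h2 : -h ≤ |h| := neg_le_abs h
    linarith [c3]
  · push_neg at c2
    exact qcore_zero_of (key (-h') (by linarith [c2])) (key (-h) (by linarith [le_abs_self h]))

end Stmt9Aux
namespace Stmt9Aux

local notation "C6" => (6 / Real.pi ^ 2 : ℝ)

lemma measurable_qcore {f g : ℝ × ℝ → ℝ} (hf : Measurable f) (hg : Measurable g) :
    Measurable fun p => Qcore p.1 (f p) (g p) := by
  unfold Qcore
  refine Measurable.ite ?_ measurable_const (Measurable.ite ?_ ?_ measurable_const)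
  · exact (measurableSet_le measurable_const measurable_fst).inter
      (measurableSet_le measurable_fst (measurable_const.div (measurable_const.add hf)))
  · exact (measurableSet_lt (measurable_const.div (measurable_const.add hf)) measurable_fst).inter
      (measurableSet_le measurable_fst (measurable_const.div (measurable_const.add hg)))
  · exact measurable_const.mul
      (((measurable_const.div measurable_fst).sub (measurable_const.add hg)).div (hf.sub hg))

lemma measurable_qker (h : ℝ) : Measurable fun p : ℝ × ℝ => Qker p.1 h p.2 := by
  unfold Qker
  refine Measurable.ite ?_ (measurable_qcore measurable_const measurable_snd)
    (Measurable.ite ?_ (measurable_qcore measurable_snd measurable_const)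
      (Measurable.ite ?_ (measurable_qcore measurable_const measurable_snd.neg)
        (measurable_qcore measurable_snd.neg measurable_const)))
  · exact measurableSet_le measurable_snd.abs measurable_const
  · exact measurableSet_le measurable_const measurable_snd
  · exact measurableSet_le measurable_snd.abs measurable_const

/-- inner integral -/
noncomputable def Fh (h s' : ℝ) : ℝ := ∫ h' in Set.Icc (-1:ℝ) 1, Qker s' h h'

lemma qint (s' h : ℝ) {u v : ℝ} : IntegrableOn (fun h' => Qker s' h h') (Set.Icc u v) := by
  refine Integrable.mono' (g := fun _ => C6)
    (integrableOn_const measure_Icc_lt_top.ne) ?_ ?_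
  · exact ((measurable_qker h).comp (measurable_const.prodMk measurable_id)).aestronglyMeasurable
  · refine Filter.Eventually.of_forall fun x => ?_
    rw [Real.norm_eq_abs, abs_of_nonneg (qker_nonneg _ _ _)]
    exact qker_le _ _ _

lemma Fh_nonneg (h s' : ℝ) : 0 ≤ Fh h s' :=
  setIntegral_nonneg measurableSet_Icc fun x _ => qker_nonneg _ _ _

lemma Fh_le (h s' : ℝ) : Fh h s' ≤ 2 * C6 := by
  have h1 : Fh h s' ≤ ∫ _ in Set.Icc (-1:ℝ) 1, C6 :=
    setIntegral_mono_on (qint s' h) (integrableOn_const measure_Icc_lt_top.ne)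
      measurableSet_Icc fun x _ => qker_le _ _ _
  have h2 : (∫ _ in Set.Icc (-1:ℝ) 1, C6) = 2 * C6 := by
    rw [setIntegral_const, Real.volume_real_Icc_of_le (by norm_num), smul_eq_mul]
    norm_num
  linarith

lemma Fh_meas (h : ℝ) : StronglyMeasurable (Fh h) := by
  have : StronglyMeasurable fun p : ℝ × ℝ => Qker p.1 h p.2 := (measurable_qker h).stronglyMeasurable
  exact this.integral_prod_right'

/-- key lower bound for Qcore -/
lemma qcore_lb {a b s' s₀ : ℝ} (ha : 0 < 1 + a) (hab : a - b ≤ 2) (h1 : 0 < s')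
    (h2 : s' ≤ s₀) (h3 : 1/2 ≤ s₀) (h4 : s₀ < 1 / (1 + b)) :
    C6 * ((1 / s₀ - (1 + b)) / 2) ≤ Qcore s' a b := by
  have hs₀ : 0 < s₀ := by linarith
  have hb : 0 < 1 + b := by
    by_contra hc
    push_neg at hc
    have : 1 / (1 + b) ≤ 0 := one_div_nonpos.mpr hc
    linarith
  have key : 1 + b < 1 / s₀ := by
    have := one_div_lt_one_div_of_lt hs₀ h4
    rwa [one_div_one_div] at this
  have hfrac1 : (1 / s₀ - (1 + b)) / 2 ≤ 1 := by
    have : 1 / s₀ ≤ 2 := by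
      rw [div_le_iff₀ hs₀]; linarith
    linarith
  unfold Qcore
  split_ifs with c1 c2
  · calc C6 * ((1 / s₀ - (1 + b)) / 2) ≤ C6 * 1 :=
        mul_le_mul_of_nonneg_left hfrac1 (le_of_lt c_pos)
      _ = C6 := mul_one _
  · refine mul_le_mul_of_nonneg_left ?_ (le_of_lt c_pos)
    have hss : 1 / s₀ ≤ 1 / s' := one_div_le_one_div_of_le h1 h2
    have hd : 0 < a - b := by
      push_neg at c1
      have hx : 1 / (1 + a) < s' := c1 (le_of_lt h1)
      by_contra hc
      push_neg at hc
      have := one_div_le_one_div_of_le ha (by linarith : 1 + a ≤ 1 + b)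
      linarith
    exact div_le_div₀ (by linarith) (by linarith) hd hab
  · exfalso
    push_neg at c1 c2
    have hx : 1 / (1 + a) < s' := c1 (le_of_lt h1)
    have := c2 hx
    linarith

end Stmt9Aux
namespace Stmt9Aux

local notation "C6" => (6 / Real.pi ^ 2 : ℝ)

lemma Qn_one (s h h' : ℝ) : Qn 1 s h h' = Qker s h h' := rfl

lemma Eker_eq (s h : ℝ) : Eker s h = ∫ s' in Set.Ioi s, Fh h s' := by
  simp only [Eker, En, Fh, Qn_one]

lemma Ezero {h s : ℝ} (hh : |h| < 1) (hs : 1 / (1 - |h|) ≤ s) : Eker s h = 0 := by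
  rw [Eker_eq]
  have heq : Set.EqOn (Fh h) (fun _ => (0:ℝ)) (Set.Ioi s) := by
    intro s' hs'
    have hgt : 1 / (1 - |h|) < s' := lt_of_le_of_lt hs hs'
    unfold Fh
    rw [setIntegral_congr_fun measurableSet_Icc
      (fun x _ => qker_zero x s' hh hgt : Set.EqOn (fun h' => Qker s' h h') (fun _ => (0:ℝ)) _)]
    simp
  rw [setIntegral_congr_fun measurableSet_Ioi heq]
  simp

lemma intFh_lt {h s : ℝ} (hh : |h| < 1) : IntegrableOn (Fh h) (Set.Ioi s) := by
  have i1 : IntegrableOn (Fh h) (Set.Ioc s (1 / (1 - |h|))) := by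
    refine Integrable.mono' (g := fun _ => 2 * C6)
      (integrableOn_const measure_Ioc_lt_top.ne)
      (Fh_meas h).aestronglyMeasurable.restrict ?_
    refine Filter.Eventually.of_forall fun x => ?_
    rw [Real.norm_eq_abs, abs_of_nonneg (Fh_nonneg h x)]
    exact Fh_le h x
  have i2 : IntegrableOn (Fh h) (Set.Ioi (1 / (1 - |h|))) := by
    have he : Set.EqOn (Fh h) (fun _ => (0:ℝ)) (Set.Ioi (1 / (1 - |h|))) := by
      intro s' hs'
      unfold Fh
      rw [setIntegral_congr_fun measurableSet_Icc
        (fun x _ => qker_zero x s' hh hs' : Set.EqOn (fun h' => Qker s' h h') (fun _ => (0:ℝ)) _)]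
      simp
    exact (integrableOn_congr_fun he measurableSet_Ioi).mpr
      integrableOn_zero
  refine (i1.union i2).mono_set fun x hx => ?_
  by_cases hxT : x ≤ 1 / (1 - |h|)
  · exact Or.inl ⟨hx, hxT⟩
  · exact Or.inr (not_le.mp hxT)

/-- main positivity engine -/
lemma Epos_engine {h s s₀ u v δ : ℝ} (hss : s < s₀) (hu : -1 ≤ u) (huv : u < v) (hv : v ≤ 1)
    (hδ : 0 < δ) (hint : IntegrableOn (Fh h) (Set.Ioi s))
    (hpt : ∀ s' ∈ Set.Ioc s s₀, ∀ h' ∈ Set.Icc u v, δ ≤ Qker s' h h') :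
    0 < Eker s h := by
  have hFlb : ∀ s' ∈ Set.Ioc s s₀, δ * (v - u) ≤ Fh h s' := by
    intro s' hs'
    have e1 : (∫ _ in Set.Icc u v, δ) = δ * (v - u) := by
      rw [setIntegral_const, Real.volume_real_Icc_of_le (by linarith), smul_eq_mul]
      ring
    have e2 : (∫ _ in Set.Icc u v, δ) ≤ ∫ h' in Set.Icc u v, Qker s' h h' :=
      setIntegral_mono_on (integrableOn_const measure_Icc_lt_top.ne) (qint s' h)
        measurableSet_Icc (hpt s' hs')
    have e3 : (∫ h' in Set.Icc u v, Qker s' h h') ≤ Fh h s' := by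
      refine setIntegral_mono_set (qint s' h)
        (Filter.Eventually.of_forall fun x => qker_nonneg _ _ _) ?_
      exact (Set.Icc_subset_Icc hu hv).eventuallyLE
    linarith
  have e4 : δ * (v - u) * (s₀ - s) = ∫ _ in Set.Ioc s s₀, δ * (v - u) := by
    rw [setIntegral_const, Real.volume_real_Ioc_of_le (by linarith), smul_eq_mul]
    ring
  have e5 : (∫ _ in Set.Ioc s s₀, δ * (v - u)) ≤ ∫ s' in Set.Ioc s s₀, Fh h s' :=
    setIntegral_mono_on (integrableOn_const measure_Ioc_lt_top.ne)
      (hint.mono_set Set.Ioc_subset_Ioi_self) measurableSet_Ioc hFlb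
  have e6 : (∫ s' in Set.Ioc s s₀, Fh h s') ≤ ∫ s' in Set.Ioi s, Fh h s' :=
    setIntegral_mono_set hint (Filter.Eventually.of_forall fun x => Fh_nonneg h x)
      Set.Ioc_subset_Ioi_self.eventuallyLE
  have hpos : 0 < δ * (v - u) * (s₀ - s) := by
    apply mul_pos (mul_pos hδ (by linarith)) (by linarith)
  rw [Eker_eq]
  linarith

lemma qker_lb_nonneg {h s' s₀ h' : ℝ} (hh0 : 0 ≤ h) (hh1 : h < 1)
    (h1 : 0 < s') (h2 : s' ≤ s₀) (h3 : 1/2 ≤ s₀) (h4 : s₀ < 1/(1-h))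
    (hI : h' ∈ Set.Icc (-1:ℝ) (-h)) :
    C6 * ((1/s₀ - (1-h))/2) ≤ Qker s' h h' := by
  obtain ⟨hi1, hi2⟩ := hI
  have h4' : s₀ < 1/(1 + -h) := by rw [show (1:ℝ) + -h = 1 - h from by ring]; exact h4
  rcases eq_or_lt_of_le hi2 with heq | hlt
  · rw [heq, Qker, if_pos (by rw [abs_neg, abs_of_nonneg hh0])]
    have := qcore_lb (a := h) (b := -h) (by linarith) (by linarith) h1 h2 h3 h4'
    rwa [show (1:ℝ) + -h = 1 - h from by ring] at this
  · have h'neg : h' < 0 := by linarith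
    have hb1 : ¬|h'| ≤ h := by rw [abs_of_neg h'neg]; linarith
    have hb2 : ¬|h| ≤ h' := by rw [abs_of_nonneg hh0]; linarith
    have hb3 : ¬|h'| ≤ -h := by rw [abs_of_neg h'neg]; linarith
    rw [Qker, if_neg hb1, if_neg hb2, if_neg hb3]
    have := qcore_lb (a := -h') (b := -h) (by linarith) (by linarith) h1 h2 h3 h4'
    rwa [show (1:ℝ) + -h = 1 - h from by ring] at this

lemma qker_lb_neg {h s' s₀ h' : ℝ} (hh0 : h < 0) (hh1 : -1 < h)
    (h1 : 0 < s') (h2 : s' ≤ s₀) (h3 : 1/2 ≤ s₀) (h4 : s₀ < 1/(1+h))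
    (hI : h' ∈ Set.Icc (-h) (1:ℝ)) :
    C6 * ((1/s₀ - (1+h))/2) ≤ Qker s' h h' := by
  obtain ⟨hi1, hi2⟩ := hI
  have hb1 : ¬|h'| ≤ h := by have := abs_nonneg h'; intro hc; linarith
  have hb2 : |h| ≤ h' := by rw [abs_of_neg hh0]; linarith
  rw [Qker, if_neg hb1, if_pos hb2]
  exact qcore_lb (a := h') (b := h) (by linarith) (by linarith) h1 h2 h3 h4

lemma Epos_lt {h s : ℝ} (hh : |h| < 1) (hs0 : 0 ≤ s) (hsT : s < 1/(1-|h|)) :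
    0 < Eker s h := by
  have hpos : (0:ℝ) < 1 - |h| := by linarith
  have habs : 0 ≤ |h| := abs_nonneg h
  have hintF : IntegrableOn (Fh h) (Set.Ioi s) := intFh_lt hh
  have hT1 : 1 ≤ 1/(1-|h|) := by rw [le_div_iff₀ hpos]; linarith
  have hs₀gt : s < (s + 1/(1-|h|))/2 := by linarith
  have hs₀lt : (s + 1/(1-|h|))/2 < 1/(1-|h|) := by linarith
  have h3 : 1/2 ≤ (s + 1/(1-|h|))/2 := by linarith
  have hs₀pos : 0 < (s + 1/(1-|h|))/2 := by linarith
  have hδ : 0 < C6 * ((1/((s + 1/(1-|h|))/2) - (1-|h|))/2) := by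
    have hlt : 1 - |h| < 1/((s + 1/(1-|h|))/2) := by
      have := one_div_lt_one_div_of_lt hs₀pos hs₀lt
      rwa [one_div_one_div] at this
    exact mul_pos c_pos (by linarith)
  rcases le_or_gt 0 h with hsign | hsign
  · have hab : |h| = h := abs_of_nonneg hsign
    rw [hab] at hδ hs₀gt hs₀lt h3 hT1 hh
    refine Epos_engine (v := -h) hs₀gt (le_refl (-1)) (by linarith) (by linarith) hδ
      hintF ?_
    intro s' hs' h' hI
    exact qker_lb_nonneg hsign hh (lt_of_le_of_lt hs0 hs'.1) hs'.2 h3 hs₀lt hI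
  · have hab : |h| = -h := abs_of_neg hsign
    rw [hab] at hδ hs₀gt hs₀lt h3 hT1 hh
    rw [show (1:ℝ) - -h = 1 + h from by ring] at hδ hs₀gt hs₀lt hT1 h3
    have hh' : -1 < h := by linarith
    refine Epos_engine hs₀gt (by linarith : (-1:ℝ) ≤ -h) (by linarith : -h < 1) (le_refl 1) hδ
      hintF ?_
    intro s' hs' h' hI
    exact qker_lb_neg hsign hh' (lt_of_le_of_lt hs0 hs'.1) hs'.2 h3 hs₀lt hI

end Stmt9Aux
namespace Stmt9Aux

local notation "C6" => (6 / Real.pi ^ 2 : ℝ)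

lemma qker_one_eq {h' : ℝ} (s : ℝ) (hmem : h' ∈ Set.Icc (-1:ℝ) 1) :
    Qker s 1 h' = Qcore s 1 h' := by
  rw [Qker, if_pos (abs_le.mpr ⟨hmem.1, hmem.2⟩)]

lemma qker_negone_eq {h' : ℝ} (s : ℝ) (hmem : h' ∈ Set.Icc (-1:ℝ) 1) :
    Qker s (-1) h' = Qcore s 1 (-h') := by
  obtain ⟨hl, hr⟩ := hmem
  rw [Qker, if_neg (by intro hc; linarith [abs_nonneg h'] : ¬|h'| ≤ -1)]
  by_cases h1 : h' = 1
  · rw [if_pos (by rw [h1]; norm_num : |(-1:ℝ)| ≤ h'), h1]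
  · rw [if_neg (by rw [abs_neg, abs_one]; exact fun hc => h1 (le_antisymm hr hc)),
      if_pos (by rw [neg_neg]; exact abs_le.mpr ⟨hl, hr⟩), neg_neg]

lemma qcore_one_ub {s b : ℝ} (hs : 1 < s) (hb : -1 ≤ b) :
    Qcore s 1 b ≤ if b ≤ 1/s - 1 then C6 * (1/s) else 0 := by
  have hs0 : 0 < s := by linarith
  have hinv1 : 1/s < 1 := by rw [div_lt_one hs0]; linarith
  have hinv0 : 0 < 1/s := by positivity
  by_cases hb' : b ≤ 1/s - 1
  · rw [if_pos hb']
    unfold Qcore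
    split_ifs with c1 c2
    · exfalso
      have h2 := c1.2
      norm_num at h2
      linarith
    · have hb1 : 0 < 1 + b := by
        by_contra hc
        push_neg at hc
        have h0 : 1/(1+b) ≤ 0 := one_div_nonpos.mpr hc
        linarith [c2.2]
      have hnum0 : 0 ≤ 1/s - (1+b) := by linarith
      have hden : (1:ℝ) ≤ 1 - b := by linarith
      refine mul_le_mul_of_nonneg_left ?_ (le_of_lt c_pos)
      calc (1/s - (1+b))/(1-b) ≤ 1/s - (1+b) := div_le_self hnum0 hden
        _ ≤ 1/s := by linarith
    · positivity
  · rw [if_neg hb']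
    push_neg at hb'
    have hb1 : 0 < 1 + b := by linarith
    have hlt : 1/(1+b) < s := by
      have h2 : 1/s < 1 + b := by linarith
      have := one_div_lt_one_div_of_lt hinv0 h2
      rwa [one_div_one_div] at this
    unfold Qcore
    split_ifs with c1 c2
    · exfalso
      have h2 := c1.2
      norm_num at h2
      linarith
    · exfalso; linarith [c2.2]
    · exact le_refl 0

lemma Fh_ub {h s' c u v : ℝ} (hc : 0 ≤ c) (huv : u ≤ v) (hu : -1 ≤ u) (hv : v ≤ 1)
    (hpt : ∀ b ∈ Set.Icc (-1:ℝ) 1, Qker s' h b ≤ Set.indicator (Set.Icc u v) (fun _ => c) b) :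
    Fh h s' ≤ c * (v - u) := by
  have step1 : Fh h s' ≤ ∫ b in Set.Icc (-1:ℝ) 1, Set.indicator (Set.Icc u v) (fun _ => c) b :=
    setIntegral_mono_on (qint s' h)
      ((integrableOn_const measure_Icc_lt_top.ne).indicator measurableSet_Icc)
      measurableSet_Icc hpt
  have step2 : (∫ b in Set.Icc (-1:ℝ) 1, Set.indicator (Set.Icc u v) (fun _ => c) b)
      = c * (v - u) := by
    rw [setIntegral_indicator measurableSet_Icc, Set.Icc_inter_Icc,
      sup_eq_right.mpr hu, inf_eq_right.mpr hv, setIntegral_const, Real.volume_real_Icc_of_le (by linarith),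
      smul_eq_mul]
    ring
  linarith

lemma Fh_tail {h : ℝ} (hh : |h| = 1) {s' : ℝ} (hs' : 1 < s') :
    Fh h s' ≤ C6 * (1/s') * (1/s') := by
  have hs0 : 0 < s' := by linarith
  have hinv1 : 1/s' < 1 := by rw [div_lt_one hs0]; linarith
  have hinv0 : 0 < 1/s' := by positivity
  have hcpos : (0:ℝ) ≤ C6 * (1/s') := by positivity
  rcases (abs_eq (by norm_num : (0:ℝ) ≤ 1)).mp hh with h1 | h1
  · subst h1
    have := Fh_ub (h := 1) (s' := s') (c := C6 * (1/s')) (u := -1) (v := 1/s' - 1)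
      hcpos (by linarith) (le_refl _) (by linarith) ?_
    · calc Fh 1 s' ≤ C6 * (1/s') * ((1/s' - 1) - (-1)) := this
        _ = C6 * (1/s') * (1/s') := by ring
    · intro b hb
      rw [qker_one_eq s' hb]
      have hub := qcore_one_ub hs' hb.1
      rw [Set.indicator_apply]
      split_ifs with hm
      · rwa [if_pos hm.2] at hub
      · rwa [if_neg (fun hc => hm ⟨hb.1, hc⟩)] at hub
  · subst h1
    have := Fh_ub (h := -1) (s' := s') (c := C6 * (1/s')) (u := 1 - 1/s') (v := 1)
      hcpos (by linarith) (by linarith) (le_refl _) ?_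
    · calc Fh (-1) s' ≤ C6 * (1/s') * (1 - (1 - 1/s')) := this
        _ = C6 * (1/s') * (1/s') := by ring
    · intro b hb
      rw [qker_negone_eq s' hb]
      have hub := qcore_one_ub hs' (by linarith [hb.2] : (-1:ℝ) ≤ -b)
      rw [Set.indicator_apply]
      split_ifs with hm
      · rwa [if_pos (by linarith [hm.1] : -b ≤ 1/s' - 1)] at hub
      · refine le_trans (le_trans hub ?_) (le_refl 0)
        rw [if_neg (by intro hc; exact hm ⟨by linarith, hb.2⟩)]

lemma intFh_one {h s : ℝ} (hh : |h| = 1) : IntegrableOn (Fh h) (Set.Ioi s) := by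
  have i1 : IntegrableOn (fun x => if x ≤ 1 then 2*C6 else C6 * (1/x) * (1/x)) (Set.Ioc s 1) := by
    refine (integrableOn_congr_fun (g := fun _ => 2*C6) ?_ measurableSet_Ioc).mpr
      (integrableOn_const measure_Ioc_lt_top.ne)
    intro x hx
    simp only [if_pos hx.2]
  have i2 : IntegrableOn (fun x => if x ≤ 1 then 2*C6 else C6 * (1/x) * (1/x)) (Set.Ioi 1) := by
    have base : IntegrableOn (fun x : ℝ => C6 * x ^ (-2:ℝ)) (Set.Ioi (1:ℝ)) :=
      (integrableOn_Ioi_rpow_of_lt (by norm_num) one_pos).const_mul _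
    refine (integrableOn_congr_fun ?_ measurableSet_Ioi).mpr base
    intro x hx
    have hx1 : (1:ℝ) < x := hx
    have hx0 : (0:ℝ) < x := by linarith
    simp only [if_neg (not_le.mpr hx1)]
    rw [Real.rpow_neg hx0.le, show (2:ℝ) = ((2:ℕ):ℝ) by norm_num, Real.rpow_natCast]
    field_simp
  have hMint : IntegrableOn (fun x => if x ≤ 1 then 2*C6 else C6 * (1/x) * (1/x)) (Set.Ioi s) := by
    refine (i1.union i2).mono_set fun x hx => ?_
    by_cases h1 : x ≤ 1
    · exact Or.inl ⟨hx, h1⟩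
    · exact Or.inr (not_le.mp h1)
  refine hMint.mono' (Fh_meas h).aestronglyMeasurable.restrict ?_
  refine Filter.Eventually.of_forall fun x => ?_
  rw [Real.norm_eq_abs, abs_of_nonneg (Fh_nonneg h x)]
  by_cases h1 : x ≤ 1
  · rw [if_pos h1]; exact Fh_le h x
  · rw [if_neg h1]; exact Fh_tail hh (not_le.mp h1)

lemma qcore_one_lb {s' s₀ b : ℝ} (h1 : 0 < s') (h2 : s' ≤ s₀) (h3 : 1 ≤ s₀)
    (hb1 : 1/(4*s₀) - 1 ≤ b) (hb2 : b ≤ 1/(2*s₀) - 1) :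
    C6 * (1/(4*s₀)) ≤ Qcore s' 1 b := by
  have hs₀ : (0:ℝ) < s₀ := by linarith
  have h4a : (0:ℝ) < 1/(4*s₀) := by positivity
  have h2a : (0:ℝ) < 1/(2*s₀) := by positivity
  have hbpos : 0 < 1 + b := by linarith
  have hble : 1 + b ≤ 1/(2*s₀) := by linarith
  have h4 : s₀ < 1/(1+b) := by
    have step := one_div_le_one_div_of_le hbpos hble
    rw [one_div_one_div] at step
    linarith
  have key := qcore_lb (a := 1) (b := b) (by norm_num) (by linarith) h1 h2 (by linarith) h4
  refine le_trans (mul_le_mul_of_nonneg_left ?_ (le_of_lt c_pos)) key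
  have e1 : 1/s₀ - 1/(2*s₀) = 1/(2*s₀) := by
    field_simp
    ring
  have e2 : 1/(2*s₀)/2 = 1/(4*s₀) := by
    rw [div_div]
    congr 1
    ring
  have : 1/(2*s₀) ≤ 1/s₀ - (1+b) := by linarith
  calc 1/(4*s₀) = 1/(2*s₀)/2 := e2.symm
    _ ≤ (1/s₀ - (1+b))/2 := by linarith
  
lemma Epos_one {h s : ℝ} (hh : |h| = 1) (hs0 : 0 ≤ s) : 0 < Eker s h := by
  have hs₀1 : (1:ℝ) ≤ s + 1 := by linarith
  have hs₀0 : (0:ℝ) < s + 1 := by linarith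
  have h4a : (0:ℝ) < 1/(4*(s+1)) := by positivity
  have h2a : (0:ℝ) < 1/(2*(s+1)) := by positivity
  have huv : 1/(4*(s+1)) < 1/(2*(s+1)) :=
    one_div_lt_one_div_of_lt (by linarith) (by linarith)
  have hv2 : 1/(2*(s+1)) ≤ 1/2 := one_div_le_one_div_of_le (by norm_num) (by linarith)
  have hδ : 0 < C6 * (1/(4*(s+1))) := mul_pos c_pos h4a
  rcases (abs_eq (by norm_num : (0:ℝ) ≤ 1)).mp hh with h1 | h1
  · subst h1
    refine Epos_engine (s₀ := s + 1) (u := 1/(4*(s+1)) - 1) (v := 1/(2*(s+1)) - 1)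
      (by linarith) (by linarith) (by linarith) (by linarith) hδ (intFh_one hh) ?_
    intro s' hs' b hb
    have hbmem : b ∈ Set.Icc (-1:ℝ) 1 := ⟨by linarith [hb.1], by linarith [hb.2]⟩
    rw [qker_one_eq s' hbmem]
    exact qcore_one_lb (lt_of_le_of_lt hs0 hs'.1) hs'.2 hs₀1 hb.1 hb.2
  · subst h1
    refine Epos_engine (s₀ := s + 1) (u := 1 - 1/(2*(s+1))) (v := 1 - 1/(4*(s+1)))
      (by linarith) (by linarith) (by linarith) (by linarith) hδ (intFh_one hh) ?_
    intro s' hs' b hb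
    have hbmem : b ∈ Set.Icc (-1:ℝ) 1 := ⟨by linarith [hb.1], by linarith [hb.2]⟩
    rw [qker_negone_eq s' hbmem]
    exact qcore_one_lb (lt_of_le_of_lt hs0 hs'.1) hs'.2 hs₀1 (by linarith [hb.2])
      (by linarith [hb.1])

lemma Eker_nonneg (s h : ℝ) : 0 ≤ Eker s h := by
  rw [Eker_eq]
  exact setIntegral_nonneg measurableSet_Ioi fun x _ => Fh_nonneg h x

end Stmt9Aux
/-- the support of `E` is `{(s,h) : h ∈ [-1,1], 0 ≤ s ≤ 1/(1−|h|)}`: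
for `|h| < 1`, `E(s,h) = 0 ↔ s ≥ 1/(1−|h|)`; for `|h| = 1`, `E(s,h) > 0` for all `s ≥ 0`;
and `E(s,h) > 0` whenever `0 ≤ s < 1`. -/
theorem stmt9 :
    ∀ h ∈ Set.Icc (-1:ℝ) 1, ∀ s : ℝ, 0 ≤ s →
      (|h| < 1 → (Eker s h = 0 ↔ 1 / (1 - |h|) ≤ s)) ∧
      (|h| = 1 → 0 < Eker s h) ∧
      (s < 1 → 0 < Eker s h) := by
  intro h hmem s hs0
  have habs : |h| ≤ 1 := abs_le.mpr ⟨hmem.1, hmem.2⟩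
  refine ⟨?_, ?_, ?_⟩
  · intro hlt
    constructor
    · intro hE
      by_contra hcon
      push_neg at hcon
      exact absurd hE (ne_of_gt (Stmt9Aux.Epos_lt hlt hs0 hcon))
    · intro hge
      exact Stmt9Aux.Ezero hlt hge
  · intro heq
    exact Stmt9Aux.Epos_one heq hs0
  · intro hs1
    rcases lt_or_eq_of_le habs with hlt | heq
    · refine Stmt9Aux.Epos_lt hlt hs0 ?_
      have hpos : (0:ℝ) < 1 - |h| := by linarith
      have hT : (1:ℝ) ≤ 1/(1-|h|) := by
        rw [le_div_iff₀ hpos]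
        linarith [abs_nonneg h]
      linarith
    · exact Stmt9Aux.Epos_one heq hs0
end

section
/- For every t ∈ (1/2, 1) and all h, h', h'' ∈ [-1,1], the convolution ∫₀ᵗ Q(t−t',h|h'') Q(t',h''|h') dt' ≥ (36/π⁴)(1−t) > 0; and for t ∈ (0,1/2] the same convolution equals (36/π⁴)·t. -/
open MeasureTheory Real Set

lemma aux_measurable_Qcore (a b : ℝ) : Measurable (fun s => Qcore s a b) := by
  unfold Qcore
  apply Measurable.ite
  · exact (measurableSet_le measurable_const measurable_id).inter
      (measurableSet_le measurable_id measurable_const)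
  · exact measurable_const
  apply Measurable.ite
  · exact (measurableSet_lt measurable_const measurable_id).inter
      (measurableSet_le measurable_id measurable_const)
  · fun_prop
  · exact measurable_const

lemma aux_measurable_Qker (h h' : ℝ) : Measurable (fun s => Qker s h h') := by
  unfold Qker
  split_ifs <;> exact aux_measurable_Qcore _ _

lemma aux_Qcore_eq {s a b : ℝ} (ha0 : 0 ≤ a) (ha1 : a ≤ 1) (hs0 : 0 ≤ s)
    (hs : s ≤ 1 / 2) : Qcore s a b = 6 / Real.pi ^ 2 := by
  unfold Qcore
  rw [if_pos]
  refine ⟨hs0, le_trans hs ?_⟩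
  rw [div_le_div_iff₀ (by norm_num) (by linarith)] <;> linarith

lemma aux_neg_case {h h' : ℝ} (c1 : ¬ |h'| ≤ h) (c2 : ¬ |h| ≤ h') (c3 : ¬ |h'| ≤ -h) :
    |h| < -h' := by
  push_neg at c1 c2 c3
  have habs : |h| < |h'| := abs_lt.mpr ⟨by linarith, c1⟩
  have : h' < 0 := by
    by_contra hc
    push_neg at hc
    rw [abs_of_nonneg hc] at habs
    linarith
  rwa [abs_of_neg this] at habs

lemma aux_Qker_eq {s h h' : ℝ} (hh : h ∈ Icc (-1:ℝ) 1) (hh' : h' ∈ Icc (-1:ℝ) 1)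
    (hs0 : 0 ≤ s) (hs : s ≤ 1 / 2) : Qker s h h' = 6 / Real.pi ^ 2 := by
  obtain ⟨h1, h2⟩ := hh; obtain ⟨h1', h2'⟩ := hh'
  unfold Qker
  split_ifs with c1 c2 c3
  · exact aux_Qcore_eq ((abs_nonneg h').trans c1) h2 hs0 hs
  · exact aux_Qcore_eq ((abs_nonneg h).trans c2) h2' hs0 hs
  · exact aux_Qcore_eq ((abs_nonneg h').trans c3) (by linarith) hs0 hs
  · have := aux_neg_case c1 c2 c3
    exact aux_Qcore_eq (le_trans (abs_nonneg h) this.le) (by linarith) hs0 hs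

lemma aux_Qcore_bound {s a b : ℝ} (ha0 : 0 ≤ a) (hba : b ≤ a) :
    0 ≤ Qcore s a b ∧ Qcore s a b ≤ 6 / Real.pi ^ 2 := by
  have hpi : (0:ℝ) < 6 / Real.pi ^ 2 := by positivity
  unfold Qcore
  split_ifs with c1 c2
  · exact ⟨hpi.le, le_refl _⟩
  · obtain ⟨cl, cr⟩ := c2
    have h1a : (0:ℝ) < 1 + a := by linarith
    have hs0 : 0 < s := lt_of_le_of_lt (by positivity) cl
    have hnum : 1 + b ≤ 1 / s := by
      rcases le_or_gt (1 + b) 0 with hb | hb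
      · exact hb.trans (by positivity)
      · rw [le_div_iff₀ hs0]
        calc (1 + b) * s ≤ (1 + b) * (1 / (1 + b)) := by
              apply mul_le_mul_of_nonneg_left cr hb.le
          _ = 1 := by field_simp
    have hnum2 : 1 / s < 1 + a := (one_div_lt h1a hs0).mp cl
    constructor
    · apply mul_nonneg hpi.le
      apply div_nonneg (by linarith) (by linarith)
    · rcases eq_or_lt_of_le hba with he | hlt
      · subst he
        simp only [sub_self, div_zero, mul_zero]
        exact hpi.le
      · have : (1 / s - (1 + b)) / (a - b) ≤ 1 := by
          rw [div_le_one (by linarith)]; linarith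
        nlinarith
  · exact ⟨le_refl _, hpi.le⟩

lemma aux_Qker_bound {s h h' : ℝ} (hh : h ∈ Icc (-1:ℝ) 1) (hh' : h' ∈ Icc (-1:ℝ) 1) :
    0 ≤ Qker s h h' ∧ Qker s h h' ≤ 6 / Real.pi ^ 2 := by
  unfold Qker
  split_ifs with c1 c2 c3
  · exact aux_Qcore_bound ((abs_nonneg h').trans c1) ((le_abs_self h').trans c1)
  · exact aux_Qcore_bound ((abs_nonneg h).trans c2) ((le_abs_self h).trans c2)
  · exact aux_Qcore_bound ((abs_nonneg h').trans c3) ((neg_le_abs h').trans c3)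
  · have := aux_neg_case c1 c2 c3
    exact aux_Qcore_bound (le_trans (abs_nonneg h) this.le)
      (by have := neg_le_abs h; linarith)

/-- for `t ∈ (1/2,1)`,
`∫₀ᵗ Q(t−t',h|h'') Q(t',h''|h') dt' ≥ (36/π⁴)(1−t) > 0`,
and for `t ∈ (0,1/2]` the convolution equals `(36/π⁴)·t`. -/
theorem stmt19 :
    ∀ t h h' h'' : ℝ,
      h ∈ Set.Icc (-1:ℝ) 1 → h' ∈ Set.Icc (-1:ℝ) 1 → h'' ∈ Set.Icc (-1:ℝ) 1 →
      ((1 / 2 < t → t < 1 →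
        (36 / Real.pi ^ 4) * (1 - t) ≤
          (∫ t' in Set.Ioc (0:ℝ) t, Qker (t - t') h h'' * Qker t' h'' h') ∧
        0 < (36 / Real.pi ^ 4) * (1 - t)) ∧
      (0 < t → t ≤ 1 / 2 →
        (∫ t' in Set.Ioc (0:ℝ) t, Qker (t - t') h h'' * Qker t' h'' h') =
          (36 / Real.pi ^ 4) * t)) := by
  
  intro t h h' h'' hh hh' hh''
  have hpi : (0:ℝ) < Real.pi := Real.pi_pos
  have hconst : (6 / Real.pi ^ 2) * (6 / Real.pi ^ 2) = 36 / Real.pi ^ 4 := by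
    field_simp; ring
  constructor
  · intro ht1 ht2
    have hpos : 0 < (36 / Real.pi ^ 4) * (1 - t) := by
      apply mul_pos (by positivity); linarith
    refine ⟨?_, hpos⟩
    set f := fun x => Qker (t - x) h h'' * Qker x h'' h' with hf
    have hmeas : Measurable f :=
      ((aux_measurable_Qker h h'').comp (measurable_const.sub measurable_id)).mul
        (aux_measurable_Qker h'' h')
    have hbd : ∀ x, 0 ≤ f x ∧ f x ≤ 36 / Real.pi ^ 4 := by
      intro x
      obtain ⟨a1, a2⟩ := aux_Qker_bound (s := t - x) hh hh''
      obtain ⟨b1, b2⟩ := aux_Qker_bound (s := x) hh'' hh'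
      refine ⟨mul_nonneg a1 b1, ?_⟩
      calc f x ≤ (6 / Real.pi ^ 2) * (6 / Real.pi ^ 2) :=
            mul_le_mul a2 b2 b1 (by positivity)
        _ = 36 / Real.pi ^ 4 := hconst
    have hint : IntegrableOn f (Set.Ioc 0 t) := by
      refine Measure.integrableOn_of_bounded (M := 36 / Real.pi ^ 4)
        measure_Ioc_lt_top.ne hmeas.aestronglyMeasurable ?_
      filter_upwards with x
      rw [Real.norm_eq_abs, abs_of_nonneg (hbd x).1]
      exact (hbd x).2
    have hsub : Set.Ioc (t - 1/2) (1/2) ⊆ Set.Ioc 0 t :=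
      Set.Ioc_subset_Ioc (by linarith) (by linarith)
    have step1 : ∫ x in Set.Ioc (t - 1/2) (1/2), f x ≤ ∫ x in Set.Ioc 0 t, f x := by
      apply setIntegral_mono_set hint
      · filter_upwards with x using (hbd x).1
      · exact hsub.eventuallyLE
    have step2 : ∫ x in Set.Ioc (t - 1/2) (1/2), f x = (36 / Real.pi ^ 4) * (1 - t) := by
      rw [setIntegral_congr_fun measurableSet_Ioc
        (g := fun _ => (36:ℝ) / Real.pi ^ 4) ?_]
      · rw [setIntegral_const, measureReal_def, Real.volume_Ioc, ENNReal.toReal_ofReal (by linarith),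
          smul_eq_mul]
        ring
      · intro x hx
        obtain ⟨hx1, hx2⟩ := hx
        show Qker (t - x) h h'' * Qker x h'' h' = _
        rw [aux_Qker_eq hh hh'' (by linarith) (by linarith),
          aux_Qker_eq hh'' hh' (by linarith) (by linarith), hconst]
    linarith
  · intro ht0 ht2
    rw [setIntegral_congr_fun measurableSet_Ioc
      (g := fun _ => (36:ℝ) / Real.pi ^ 4) ?_]
    · rw [setIntegral_const, measureReal_def, Real.volume_Ioc, ENNReal.toReal_ofReal (by linarith),
        smul_eq_mul]
      ring
    · intro x hx
      obtain ⟨hx1, hx2⟩ := hx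
      show Qker (t - x) h h'' * Qker x h'' h' = _
      rw [aux_Qker_eq hh hh'' (by linarith) (by linarith),
        aux_Qker_eq hh'' hh' (by linarith) (by linarith), hconst]
end
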